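/- arXiv:1902.07252 — 4 statements merged into one kernel-verified Lean document; each statement's English description precedes it below -/
import Mathlib

section
/- For every z = (z_1, …, z_d) ∈ T_L and every coordinate direction i ∈ {1, …, d}, the spin–spin correlation satisfies ⟨φ_o · φ_z⟩_{L,N,β} ≤ ⟨φ_o · φ_{z_i e_i}⟩_{L,N,β}, where z_i e_i is the projection of z onto the i-th cartesian axis. -/
open MeasureTheory Metric
open scoped RealInnerProductSpace BigOperators

/-- Vertices of the torus `(ℤ/Lℤ)^d`. -/
abbrev TorusPt (d L : ℕ) := Fin d → ZMod L

/-- Nearest-neighbour adjacency on the torus: `x` and `y` differ by `±1 (mod L)`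
in exactly one coordinate. -/
def torusAdj {d L : ℕ} (x y : TorusPt d L) : Prop :=
  ∃ j : Fin d, y = Function.update x j (x j + 1) ∨ y = Function.update x j (x j - 1)

instance {d L : ℕ} (x y : TorusPt d L) : Decidable (torusAdj x y) := by
  unfold torusAdj; infer_instance

/-- The unit sphere `S^{N-1} ⊂ ℝ^N`. -/
abbrev SpinSphere (N : ℕ) := sphere (0 : EuclideanSpace ℝ (Fin N)) 1

/-- A spin configuration on the torus. -/
abbrev SpinCfg (d L N : ℕ) := TorusPt d L → SpinSphere N

/-- The uniform probability measure on the unit sphere `S^{N-1}`. -/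
noncomputable def sphereUniform (N : ℕ) : Measure (SpinSphere N) :=
  ((volume : Measure (EuclideanSpace ℝ (Fin N))).toSphere Set.univ)⁻¹ •
    (volume : Measure (EuclideanSpace ℝ (Fin N))).toSphere

/-- The product over vertices of the uniform probability measures on the sphere. -/
noncomputable def spinMeasure (d L N : ℕ) [NeZero L] : Measure (SpinCfg d L N) :=
  Measure.pi fun _ : TorusPt d L => sphereUniform N

/-- The Hamiltonian `H(φ) = -∑_{{x,y} edge} φ_x · φ_y`; every unordered
nearest-neighbour edge appears exactly twice in the double sum below. -/
noncomputable def hamiltonian {d L N : ℕ} [NeZero L] (φ : SpinCfg d L N) : ℝ :=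
  -(1 / 2) * ∑ x : TorusPt d L, ∑ y : TorusPt d L,
    if torusAdj x y then
      ⟪(φ x : EuclideanSpace ℝ (Fin N)), (φ y : EuclideanSpace ℝ (Fin N))⟫
    else 0

/-- The Gibbs expectation `⟨f⟩_{L,N,β}`. -/
noncomputable def gibbsExp (d L N : ℕ) [NeZero L] (β : ℝ) (f : SpinCfg d L N → ℝ) : ℝ :=
  (∫ φ, Real.exp (-β * hamiltonian φ) ∂(spinMeasure d L N))⁻¹ *
    ∫ φ, f φ * Real.exp (-β * hamiltonian φ) ∂(spinMeasure d L N)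

/-- The spin-spin correlation `⟨φ_x ⬝ φ_y⟩_{L,N,β}`. -/
noncomputable def corrDot (d L N : ℕ) [NeZero L] (β : ℝ) (x y : TorusPt d L) : ℝ :=
  gibbsExp d L N β fun φ =>
    ⟪(φ x : EuclideanSpace ℝ (Fin N)), (φ y : EuclideanSpace ℝ (Fin N))⟫

/-- The correlation `⟨φ_x^1 φ_y^1⟩_{L,N,β}` of first components. -/
noncomputable def corrOne (d L N : ℕ) [NeZero L] [NeZero N] (β : ℝ) (x y : TorusPt d L) : ℝ :=
  gibbsExp d L N β fun φ =>
    (φ x : EuclideanSpace ℝ (Fin N)) 0 * (φ y : EuclideanSpace ℝ (Fin N)) 0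

/-- The origin of the torus. -/
def torusOrigin (d L : ℕ) : TorusPt d L := fun _ => 0

/-- The point `n • e_i` on the `i`-th cartesian axis. -/
def axisPt (d L : ℕ) (i : Fin d) (n : ℕ) : TorusPt d L :=
  fun k => if k = i then (n : ZMod L) else 0

/-- The sup torus norm `‖z‖_∞ = max_i min(z_i, L - z_i)`. -/
def tnormInf {d L : ℕ} (z : TorusPt d L) : ℕ :=
  Finset.univ.sup fun i : Fin d => min (z i).val (L - (z i).val)

/-!
Let `w = z - z_i e_i` and let `θ` be the reflection `x_i ↦ z_i - x_i` of the torus, so that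
`θ o = z_i e_i` and `θ w = z`, while `o` and `w` both lie on the closed side of `θ`. Reflection
positivity applied to `φ_o - φ_w` gives
`0 ≤ ⟨(φ_o - φ_w) · (φ_{θ o} - φ_{θ w})⟩ = 2 (⟨φ_o · φ_{z_i e_i}⟩ - ⟨φ_o · φ_z⟩)`,
the mixed terms being identified by the reflection symmetry and by translation by `w`.

Reflection positivity is proved by gluing a configuration from the spins `π` on the fixed points
of `θ`, a half-configuration `α` and a reflected half-configuration `α'`. The Boltzmann weight then
factors as `e^{A(π, α)} e^{A(π, α')} exp (∑ⱼ cⱼ aⱼ(α) aⱼ(α'))` with `cⱼ ≥ 0`, since the only bonds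
crossing the mirror join `x` to `θ x`; expanding the last exponential, every term of the integral
over `(α, α')` is a sum of squares.
-/

section PositiveKernel

variable {Ω ι : Type*} [MeasurableSpace Ω] {ν : Measure Ω}

lemma integrable_of_abs_le [IsFiniteMeasure ν] {f : Ω → ℝ} (hf : Measurable f) {C : ℝ}
    (hC : ∀ ω, |f ω| ≤ C) : Integrable f ν :=
  .of_bound hf.aestronglyMeasurable C (.of_forall hC)

lemma summable_integral_norm_of_abs_le [IsFiniteMeasure ν] {F : ℕ → Ω → ℝ} {C : ℕ → ℝ}
    (hC : Summable C) (hFC : ∀ n ω, |F n ω| ≤ C n) : Summable fun n => ∫ ω, ‖F n ω‖ ∂ν := by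
  refine Summable.of_nonneg_of_le (fun n => integral_nonneg fun _ => norm_nonneg _)
    (fun n => ?_) (hC.mul_right (ν.real Set.univ))
  have := norm_integral_le_of_norm_le_const (μ := ν) (f := fun ω => ‖F n ω‖)
    (.of_forall fun ω => by simpa only [norm_norm, Real.norm_eq_abs, abs_abs] using hFC n ω)
  exact (le_abs_self _).trans (by simpa only [Real.norm_eq_abs] using this)

lemma integral_nonneg_of_hasSum {F : ℕ → Ω → ℝ} {g : Ω → ℝ} (hF : ∀ n, Integrable (F n) ν)
    (hFsum : Summable fun n => ∫ ω, ‖F n ω‖ ∂ν) (hg : ∀ ω, HasSum (F · ω) (g ω))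
    (hF0 : ∀ n, 0 ≤ ∫ ω, F n ω ∂ν) : 0 ≤ ∫ ω, g ω ∂ν := by
  rw [show g = fun ω => ∑' n, F n ω from funext fun ω => (hg ω).tsum_eq.symm,
    ← integral_tsum_of_summable_integral_norm hF hFsum]
  exact tsum_nonneg hF0

lemma abs_sum_mul_mul_le [Fintype ι] {c : ι → ℝ} (hc : ∀ j, 0 ≤ c j) {u v : ι → ℝ} {A : ℝ}
    (hu : ∀ j, |u j| ≤ A) (hv : ∀ j, |v j| ≤ A) :
    |∑ j, c j * (u j * v j)| ≤ ∑ j, c j * A ^ 2 :=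
  (Finset.abs_sum_le_sum_abs _ _).trans <| Finset.sum_le_sum fun j _ => by
    rw [abs_mul, abs_of_nonneg (hc j), abs_mul, sq]
    exact mul_le_mul_of_nonneg_left
      (mul_le_mul (hu j) (hv j) (abs_nonneg _) ((abs_nonneg _).trans (hu j))) (hc j)

lemma abs_mul_mul_exp_sum_le [Fintype ι] {c : ι → ℝ} (hc : ∀ j, 0 ≤ c j) {s t M : ℝ}
    (hs : |s| ≤ M) (ht : |t| ≤ M) {u v : ι → ℝ} {A : ℝ} (hu : ∀ j, |u j| ≤ A)
    (hv : ∀ j, |v j| ≤ A) :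
    |s * t * Real.exp (∑ j, c j * (u j * v j))| ≤ M * M * Real.exp (∑ j, c j * A ^ 2) := by
  have hM : 0 ≤ M := (abs_nonneg _).trans hs
  rw [abs_mul, abs_mul, Real.abs_exp]
  exact mul_le_mul (mul_le_mul hs ht (abs_nonneg _) hM)
    (Real.exp_le_exp.2 ((le_abs_self _).trans (abs_sum_mul_mul_le hc hu hv)))
    (Real.exp_pos _).le (mul_nonneg hM hM)

theorem integral_sum_mul_mul_nonneg [SFinite ν] {s : Finset ι} {c : ι → ℝ}
    (hc : ∀ j ∈ s, 0 ≤ c j) {h : ι → Ω → ℝ} (hh : ∀ j ∈ s, Integrable (h j) ν) :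
    0 ≤ ∫ p, ∑ j ∈ s, c j * (h j p.1 * h j p.2) ∂(ν.prod ν) := by
  rw [integral_finsetSum _ fun j hj => ((hh j hj).mul_prod (hh j hj)).const_mul (c j)]
  refine Finset.sum_nonneg fun j hj => ?_
  rw [integral_const_mul, integral_prod_mul]
  exact mul_nonneg (hc j hj) (mul_self_nonneg _)

variable [IsFiniteMeasure ν] [Fintype ι] {f : Ω → ℝ} {a : ι → Ω → ℝ} {c : ι → ℝ}

theorem integral_mul_mul_sum_pow_nonneg (hc : ∀ j, 0 ≤ c j) (hf : Measurable f) {M : ℝ}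
    (hfM : ∀ ω, |f ω| ≤ M) (ha : ∀ j, Measurable (a j)) {A : ℝ} (haA : ∀ j ω, |a j ω| ≤ A)
    (n : ℕ) :
    0 ≤ ∫ p, f p.1 * f p.2 * (∑ j, c j * (a j p.1 * a j p.2)) ^ n ∂(ν.prod ν) := by
  set h : (Fin n → ι) → Ω → ℝ := fun g ω => f ω * ∏ m, a (g m) ω
  have hexpand : ∀ p : Ω × Ω, f p.1 * f p.2 * (∑ j, c j * (a j p.1 * a j p.2)) ^ n =
      ∑ g, (∏ m, c (g m)) * (h g p.1 * h g p.2) := fun p => by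
    rw [Finset.sum_pow', Fintype.piFinset_univ, Finset.mul_sum]
    refine Finset.sum_congr rfl fun g _ => ?_
    simp only [h, Finset.prod_mul_distrib]
    ring
  simp_rw [hexpand]
  refine integral_sum_mul_mul_nonneg (fun g _ => Finset.prod_nonneg fun m _ => hc (g m))
    fun g _ => integrable_of_abs_le (C := M * A ^ n)
      (hf.mul (Finset.measurable_prod _ fun m _ => ha (g m))) fun ω => ?_
  have hprod : ∏ m, |a (g m) ω| ≤ A ^ n := by
    simpa using Finset.prod_le_prod (s := Finset.univ) (fun m _ => abs_nonneg _)
      fun m _ => haA (g m) ω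
  rw [abs_mul, Finset.abs_prod]
  exact mul_le_mul (hfM ω) hprod (Finset.prod_nonneg fun m _ => abs_nonneg _)
    ((abs_nonneg _).trans (hfM ω))

theorem integral_mul_mul_exp_sum_nonneg (hc : ∀ j, 0 ≤ c j) (hf : Measurable f) {M : ℝ}
    (hfM : ∀ ω, |f ω| ≤ M) (ha : ∀ j, Measurable (a j)) {A : ℝ} (haA : ∀ j ω, |a j ω| ≤ A) :
    0 ≤ ∫ p, f p.1 * f p.2 * Real.exp (∑ j, c j * (a j p.1 * a j p.2)) ∂(ν.prod ν) := by
  set K : Ω × Ω → ℝ := fun p => ∑ j, c j * (a j p.1 * a j p.2)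
  set F : ℕ → Ω × Ω → ℝ := fun n p => f p.1 * f p.2 * K p ^ n / n.factorial
  set B := ∑ j, c j * A ^ 2
  have hFbound : ∀ n p, |F n p| ≤ M * M * (B ^ n / n.factorial) := fun n p => by
    change |f p.1 * f p.2 * K p ^ n / n.factorial| ≤ _
    rw [mul_div_assoc, abs_mul, abs_mul, abs_div, abs_pow, Nat.abs_cast]
    have hM : 0 ≤ M := (abs_nonneg _).trans (hfM p.1)
    gcongr
    exacts [hfM p.1, hfM p.2, abs_sum_mul_mul_le hc (haA · p.1) (haA · p.2)]
  have hK : Measurable K := Finset.measurable_sum _ fun j _ =>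
    ((ha j).comp measurable_fst).mul ((ha j).comp measurable_snd) |>.const_mul (c j)
  refine integral_nonneg_of_hasSum (F := F) (fun n => integrable_of_abs_le
      ((((hf.comp measurable_fst).mul (hf.comp measurable_snd)).mul (hK.pow_const n)).div_const _)
      (hFbound n))
    (summable_integral_norm_of_abs_le ((Real.summable_pow_div_factorial B).mul_left _) hFbound)
    (fun p => ?_) (fun n => ?_)
  · rw [Real.exp_eq_exp_ℝ]
    simpa only [F, mul_div_assoc] using
      (NormedSpace.expSeries_div_hasSum_exp (K p)).mul_left (f p.1 * f p.2)
  · simp only [F, integral_div]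
    exact div_nonneg (integral_mul_mul_sum_pow_nonneg hc hf hfM ha haA n) (Nat.cast_nonneg _)

end PositiveKernel

section ProductMeasure

lemma MeasureTheory.MeasurePreserving.integral_comp_of_aestronglyMeasurable {α β : Type*}
    [MeasurableSpace α] [MeasurableSpace β] {μ : Measure α} {ν : Measure β} {f : α → β}
    (hf : MeasurePreserving f μ ν) {g : β → ℝ} (hg : AEStronglyMeasurable g ν) :
    ∫ x, g (f x) ∂μ = ∫ y, g y ∂ν := by
  rw [← hf.map_eq] at hg ⊢
  exact (integral_map hf.measurable.aemeasurable hg).symm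

theorem measurePreserving_piecewise {ι : Type*} [Fintype ι] {α : ι → Type*}
    [∀ i, MeasurableSpace (α i)] (μ : ∀ i, Measure (α i)) [∀ i, IsProbabilityMeasure (μ i)]
    (s : Set ι) [DecidablePred (· ∈ s)] :
    MeasurePreserving (fun p : (∀ i, α i) × (∀ i, α i) => s.piecewise p.1 p.2)
      ((Measure.pi μ).prod (Measure.pi μ)) (Measure.pi μ) := by
  have hmeas : Measurable (fun p : (∀ i, α i) × (∀ i, α i) => s.piecewise p.1 p.2) := by
    refine measurable_pi_lambda _ fun i => ?_
    by_cases hi : i ∈ s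
    · simp only [Set.piecewise, hi, if_true]; fun_prop
    · simp only [Set.piecewise, hi, if_false]; fun_prop
  refine ⟨hmeas, (Measure.pi_eq fun t ht => ?_).symm⟩
  have hpre : (fun p : (∀ i, α i) × (∀ i, α i) => s.piecewise p.1 p.2) ⁻¹' Set.univ.pi t =
      (Set.univ.pi fun i => if i ∈ s then t i else Set.univ) ×ˢ
        (Set.univ.pi fun i => if i ∈ s then Set.univ else t i) := by
    ext p
    simp only [Set.mem_preimage, Set.mem_univ_pi, Set.mem_prod, Set.piecewise]
    refine ⟨fun h => ⟨fun i => ?_, fun i => ?_⟩, fun ⟨h₁, h₂⟩ i => ?_⟩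
    · have := h i; split_ifs at this ⊢ <;> trivial
    · have := h i; split_ifs at this ⊢ <;> trivial
    · have h₁ := h₁ i; have h₂ := h₂ i; split_ifs at h₁ h₂ ⊢ <;> assumption
  rw [Measure.map_apply hmeas (.univ_pi ht), hpre, Measure.prod_prod, Measure.pi_pi,
    Measure.pi_pi, ← Finset.prod_mul_distrib]
  refine Finset.prod_congr rfl fun i _ => ?_
  split_ifs <;> simp

variable {V S : Type*} [MeasurableSpace S]

lemma MeasurableEquiv.coe_piCongrLeft_symm_eq_comp (e : Equiv.Perm V) :
    ⇑(MeasurableEquiv.piCongrLeft (fun _ : V => S) e.symm) = fun φ => φ ∘ e := by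
  ext φ x
  simp [MeasurableEquiv.coe_piCongrLeft, Equiv.piCongrLeft_apply]

variable [Fintype V] (μ : Measure S) [SigmaFinite μ]

theorem measurePreserving_comp_perm (e : Equiv.Perm V) :
    MeasurePreserving (fun φ : V → S => φ ∘ e) (Measure.pi fun _ => μ) (Measure.pi fun _ => μ) :=
  MeasurableEquiv.coe_piCongrLeft_symm_eq_comp (S := S) e ▸
    measurePreserving_piCongrLeft (fun _ => μ) e.symm

theorem integral_comp_perm (e : Equiv.Perm V) (F : (V → S) → ℝ) :
    ∫ φ, F (φ ∘ e) ∂(Measure.pi fun _ => μ) = ∫ φ, F φ ∂(Measure.pi fun _ => μ) := by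
  simpa [MeasurableEquiv.coe_piCongrLeft_symm_eq_comp] using
    (measurePreserving_piCongrLeft (fun _ => μ) e.symm).integral_comp' F

end ProductMeasure

section ReflectionPositivity

variable {V S : Type*}

structure IsReflectionPartition (θ : Equiv.Perm V) (P : Set V) : Prop where
  involutive : Function.Involutive θ
  apply_notMem : ∀ x ∈ P, θ x ∉ P
  apply_eq_self : ∀ x, x ∉ P → θ x ∉ P → θ x = x

def reflectionGlue (θ : Equiv.Perm V) (P : Set V) [DecidablePred (· ∈ P)]
    (q : ((V → S) × (V → S)) × (V → S)) : V → S :=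
  P.piecewise q.1.1 ({x | θ x ∈ P}.piecewise (q.1.2 ∘ θ) q.2)

variable {θ : Equiv.Perm V} {P : Set V} [DecidablePred (· ∈ P)]

theorem reflectionGlue_eqOn (α α' α'' π : V → S) :
    Set.EqOn (reflectionGlue θ P ((α, α'), π)) (reflectionGlue θ P ((α, α''), π))
      {x | θ x ∉ P} := fun x hx => by
  by_cases hxP : x ∈ P
  · simp [reflectionGlue, hxP]
  · simp_all [reflectionGlue]

theorem reflectionGlue_comp (h : IsReflectionPartition θ P) (α α' π : V → S) :
    reflectionGlue θ P ((α, α'), π) ∘ θ = reflectionGlue θ P ((α', α), π) := by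
  funext x
  by_cases hxP : x ∈ P
  · simp [reflectionGlue, hxP, h.apply_notMem x hxP, h.involutive x]
  by_cases hθxP : θ x ∈ P
  · simp [reflectionGlue, hxP, hθxP]
  · simp [reflectionGlue, hxP, h.apply_eq_self x hxP hθxP]

variable [Fintype V] [MeasurableSpace S] (μ : Measure S) [IsProbabilityMeasure μ]

theorem measurePreserving_reflectionGlue :
    MeasurePreserving (reflectionGlue θ P)
      (((Measure.pi fun _ : V => μ).prod (Measure.pi fun _ => μ)).prod (Measure.pi fun _ => μ))
      (Measure.pi fun _ => μ) :=
  (measurePreserving_piecewise _ P).comp <| ((MeasurePreserving.id _).prod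
    ((measurePreserving_piecewise _ _).comp ((measurePreserving_comp_perm μ θ).prod
      (MeasurePreserving.id _)))).comp (measurePreserving_prodAssoc _ _ _)

theorem integral_mul_comp_mul_exp_sum_nonneg (h : IsReflectionPartition θ P) {ι : Type*}
    [Fintype ι] {F : (V → S) → ℝ} {a : ι → (V → S) → ℝ} {c : ι → ℝ} (hc : ∀ j, 0 ≤ c j)
    (hF : Measurable F) {M : ℝ} (hFM : ∀ φ, |F φ| ≤ M) (hFP : DependsOn F {x | θ x ∉ P})
    (ha : ∀ j, Measurable (a j)) {A : ℝ} (haA : ∀ j φ, |a j φ| ≤ A)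
    (haP : ∀ j, DependsOn (a j) {x | θ x ∉ P}) :
    0 ≤ ∫ φ, F φ * F (φ ∘ θ) * Real.exp (∑ j, c j * (a j φ * a j (φ ∘ θ)))
      ∂(Measure.pi fun _ => μ) := by
  have hθ : Measurable fun φ : V → S => φ ∘ θ := (measurePreserving_comp_perm μ θ).measurable
  have hmeas : Measurable fun φ : V → S =>
      F φ * F (φ ∘ θ) * Real.exp (∑ j, c j * (a j φ * a j (φ ∘ θ))) :=
    (hF.mul (hF.comp hθ)).mul (Finset.measurable_sum _ fun j _ =>
      ((ha j).mul ((ha j).comp hθ)).const_mul (c j)).exp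
  have hglue := measurePreserving_reflectionGlue (θ := θ) (P := P) μ
  rw [← hglue.integral_comp_of_aestronglyMeasurable hmeas.aestronglyMeasurable,
    integral_prod_symm]
  swap
  · exact integrable_of_abs_le (hmeas.comp hglue.measurable)
      fun q => abs_mul_mul_exp_sum_le hc (hFM _) (hFM _) (haA · _) (haA · _)
  refine integral_nonneg fun π => ?_
  have hdiag : Measurable fun α : V → S => reflectionGlue θ P ((α, α), π) :=
    hglue.measurable.comp (by fun_prop)
  refine (integral_mul_mul_exp_sum_nonneg hc (hF.comp hdiag) (fun _ => hFM _)
    (fun j => (ha j).comp hdiag) (fun j _ => haA j _)).trans_eq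
    (integral_congr_ae (.of_forall fun p => ?_))
  -- `F` and the `a j` only see `(p.1, π)`, and their reflections only see `(p.2, π)`.
  simp only [Function.comp_apply, reflectionGlue_comp h,
    hFP (reflectionGlue_eqOn (θ := θ) (P := P) p.1 p.2 p.1 π),
    hFP (reflectionGlue_eqOn (θ := θ) (P := P) p.2 p.1 p.2 π),
    fun j => haP j (reflectionGlue_eqOn (θ := θ) (P := P) p.1 p.2 p.1 π),
    fun j => haP j (reflectionGlue_eqOn (θ := θ) (P := P) p.2 p.1 p.2 π)]

end ReflectionPositivity

section Couplings

variable {V : Type*} {θ : Equiv.Perm V} {P : Set V} [DecidablePred (· ∈ P)]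

/-- The couplings inside the closed half `{x | θ x ∉ P}`; a coupling between two fixed points of `θ`
is shared equally with the reflected half. -/
noncomputable def halfCoupling (θ : Equiv.Perm V) (P : Set V) [DecidablePred (· ∈ P)]
    (J : V → V → ℝ) (x y : V) : ℝ :=
  if θ x ∈ P ∨ θ y ∈ P then 0 else if x ∈ P ∨ y ∈ P then J x y else J x y / 2

def crossCoupling (θ : Equiv.Perm V) (P : Set V) [DecidablePred (· ∈ P)] (J : V → V → ℝ)
    (x y : V) : ℝ :=
  if x ∈ P ∧ θ y ∈ P then J x y else 0

lemma eq_halfCoupling_add_crossCoupling (h : IsReflectionPartition θ P) {J : V → V → ℝ}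
    (hsymm : ∀ x y, J y x = J x y) (hθ : ∀ x y, J (θ x) (θ y) = J x y) :
    J = halfCoupling θ P J + (fun x y => halfCoupling θ P J (θ x) (θ y)) + crossCoupling θ P J +
      fun x y => crossCoupling θ P J y x := by
  funext x y
  have hx := h.apply_notMem x
  have hy := h.apply_notMem y
  have hxx := h.involutive x
  have hyy := h.involutive y
  simp only [Pi.add_apply, halfCoupling, crossCoupling, hxx, hyy, hθ, hsymm x y]
  by_cases p : x ∈ P <;> by_cases p' : θ x ∈ P <;> by_cases q : y ∈ P <;>
    by_cases q' : θ y ∈ P <;> simp_all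

end Couplings

section CoordOn

variable {V : Type*} {N : ℕ} {P : Set V} [DecidablePred (· ∈ P)]

lemma EuclideanSpace.real_inner_eq_sum_mul (u v : EuclideanSpace ℝ (Fin N)) :
    ⟪u, v⟫ = ∑ k, u k * v k := by
  simp [PiLp.inner_apply, mul_comm]

variable (P) in
def coordOn (j : V × Fin N) (φ : V → SpinSphere N) : ℝ :=
  if j.1 ∈ P then (φ j.1 : EuclideanSpace ℝ (Fin N)) j.2 else 0

lemma measurable_coordOn (j : V × Fin N) : Measurable (coordOn (N := N) P j) := by
  unfold coordOn
  split_ifs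
  · fun_prop
  · fun_prop

lemma abs_coordOn_le_one (j : V × Fin N) (φ : V → SpinSphere N) : |coordOn P j φ| ≤ 1 := by
  unfold coordOn
  split_ifs
  · simpa [norm_eq_of_mem_sphere] using PiLp.norm_apply_le (φ j.1 : EuclideanSpace ℝ (Fin N)) j.2
  · simp

lemma coordOn_dependsOn (j : V × Fin N) : DependsOn (coordOn (N := N) P j) P := fun φ ψ h => by
  unfold coordOn
  split_ifs with hjP
  · rw [h j.1 hjP]
  · rfl

end CoordOn

section PairEnergy

variable {V : Type*} [Fintype V] {N : ℕ}

noncomputable def pairEnergy (J : V → V → ℝ) (φ : V → SpinSphere N) : ℝ :=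
  ∑ x, ∑ y, J x y * ⟪(φ x : EuclideanSpace ℝ (Fin N)), (φ y : EuclideanSpace ℝ (Fin N))⟫

lemma pairEnergy_add (J J' : V → V → ℝ) (φ : V → SpinSphere N) :
    pairEnergy (J + J') φ = pairEnergy J φ + pairEnergy J' φ := by
  simp only [pairEnergy, Pi.add_apply, add_mul, Finset.sum_add_distrib]

lemma pairEnergy_swap (J : V → V → ℝ) (φ : V → SpinSphere N) :
    pairEnergy (fun x y => J y x) φ = pairEnergy J φ := by
  rw [pairEnergy, Finset.sum_comm]
  simp only [pairEnergy, real_inner_comm]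

lemma pairEnergy_comp (J : V → V → ℝ) (e : Equiv.Perm V) (φ : V → SpinSphere N) :
    pairEnergy J (φ ∘ e) = pairEnergy (fun x y => J (e.symm x) (e.symm y)) φ := by
  simp only [pairEnergy, Function.comp_apply]
  refine (Fintype.sum_equiv e _ _ fun x => ?_)
  exact Fintype.sum_equiv e _ _ fun y => by simp

lemma abs_pairEnergy_le (J : V → V → ℝ) (φ : V → SpinSphere N) :
    |pairEnergy J φ| ≤ ∑ x, ∑ y, |J x y| := by
  refine (Finset.abs_sum_le_sum_abs _ _).trans (Finset.sum_le_sum fun x _ =>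
    (Finset.abs_sum_le_sum_abs _ _).trans (Finset.sum_le_sum fun y _ => ?_))
  rw [abs_mul]
  refine mul_le_of_le_one_right (abs_nonneg _) ?_
  have := abs_real_inner_le_norm (φ x : EuclideanSpace ℝ (Fin N)) (φ y)
  simpa [norm_eq_of_mem_sphere] using this

lemma measurable_pairEnergy (J : V → V → ℝ) :
    Measurable (pairEnergy (N := N) J) := by
  unfold pairEnergy
  fun_prop

lemma pairEnergy_dependsOn (J : V → V → ℝ) {s : Set V} (hJ : ∀ x y, J x y ≠ 0 → x ∈ s ∧ y ∈ s) :
    DependsOn (pairEnergy (N := N) J) s := fun φ ψ h => by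
  refine Finset.sum_congr rfl fun x _ => Finset.sum_congr rfl fun y _ => ?_
  by_cases hxy : J x y = 0
  · simp [hxy]
  · rw [h x (hJ x y hxy).1, h y (hJ x y hxy).2]

variable {θ : Equiv.Perm V} {P : Set V} [DecidablePred (· ∈ P)]

lemma pairEnergy_crossCoupling (h : IsReflectionPartition θ P) {J : V → V → ℝ}
    (hcross : ∀ x y, x ∈ P → θ y ∈ P → J x y ≠ 0 → y = θ x) (φ : V → SpinSphere N) :
    pairEnergy (crossCoupling θ P J) φ = ∑ x, if x ∈ P then
      J x (θ x) * ⟪(φ x : EuclideanSpace ℝ (Fin N)), (φ (θ x) : EuclideanSpace ℝ (Fin N))⟫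
      else 0 := by
  refine Finset.sum_congr rfl fun x _ => ?_
  split_ifs with hxP
  · refine (Finset.sum_eq_single (θ x) (fun y _ hy => ?_) (by simp)).trans ?_
    · by_cases hyP : θ y ∈ P
      · simp [crossCoupling, not_not.1 (mt (hcross x y hxP hyP) hy)]
      · simp [crossCoupling, hyP]
    · simp [crossCoupling, hxP, h.involutive x]
  · simp [crossCoupling, hxP]

theorem pairEnergy_eq_half_add_half_comp_add_cross (h : IsReflectionPartition θ P)
    {J : V → V → ℝ} (hsymm : ∀ x y, J y x = J x y) (hθ : ∀ x y, J (θ x) (θ y) = J x y)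
    (hcross : ∀ x y, x ∈ P → θ y ∈ P → J x y ≠ 0 → y = θ x) (φ : V → SpinSphere N) :
    pairEnergy J φ = pairEnergy (halfCoupling θ P J) φ + pairEnergy (halfCoupling θ P J) (φ ∘ θ) +
      ∑ x, if x ∈ P then 2 * J x (θ x) *
        ⟪(φ x : EuclideanSpace ℝ (Fin N)), (φ (θ x) : EuclideanSpace ℝ (Fin N))⟫ else 0 := by
  have hθsymm : ∀ x, θ.symm x = θ x := fun x => θ.symm_apply_eq.2 (h.involutive x).symm
  conv_lhs => rw [eq_halfCoupling_add_crossCoupling h hsymm hθ]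
  rw [pairEnergy_add, pairEnergy_add, pairEnergy_add, pairEnergy_swap (crossCoupling θ P J),
    pairEnergy_comp, pairEnergy_crossCoupling h hcross, add_assoc, ← Finset.sum_add_distrib]
  simp only [hθsymm]
  congr 1
  refine Finset.sum_congr rfl fun x _ => ?_
  split_ifs <;> ring

lemma sum_ite_inner_eq_sum_coordOn (K : V → ℝ) (φ : V → SpinSphere N) :
    (∑ x, if x ∈ P then K x *
      ⟪(φ x : EuclideanSpace ℝ (Fin N)), (φ (θ x) : EuclideanSpace ℝ (Fin N))⟫ else 0) =
      ∑ j : V × Fin N, K j.1 * (coordOn P j φ * coordOn P j (φ ∘ θ)) := by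
  rw [Fintype.sum_prod_type]
  refine Finset.sum_congr rfl fun x _ => ?_
  split_ifs with hxP
  · simp [coordOn, hxP, EuclideanSpace.real_inner_eq_sum_mul, Finset.mul_sum]
  · simp [coordOn, hxP]

theorem integral_mul_comp_mul_exp_pairEnergy_nonneg (μ : Measure (SpinSphere N))
    [IsProbabilityMeasure μ] (h : IsReflectionPartition θ P) {J : V → V → ℝ}
    (hJ : ∀ x y, 0 ≤ J x y) (hsymm : ∀ x y, J y x = J x y) (hθ : ∀ x y, J (θ x) (θ y) = J x y)
    (hcross : ∀ x y, x ∈ P → θ y ∈ P → J x y ≠ 0 → y = θ x) {G : (V → SpinSphere N) → ℝ}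
    (hG : Measurable G) {M : ℝ} (hGM : ∀ φ, |G φ| ≤ M) (hGP : DependsOn G {x | θ x ∉ P}) :
    0 ≤ ∫ φ, G φ * G (φ ∘ θ) * Real.exp (pairEnergy J φ) ∂(Measure.pi fun _ => μ) := by
  set F : (V → SpinSphere N) → ℝ := fun φ => G φ * Real.exp (pairEnergy (halfCoupling θ P J) φ)
  have hsplit : ∀ φ, G φ * G (φ ∘ θ) * Real.exp (pairEnergy J φ) = F φ * F (φ ∘ θ) *
      Real.exp (∑ j : V × Fin N, 2 * J j.1 (θ j.1) * (coordOn P j φ * coordOn P j (φ ∘ θ))) :=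
    fun φ => by
      rw [pairEnergy_eq_half_add_half_comp_add_cross h hsymm hθ hcross,
        sum_ite_inner_eq_sum_coordOn, Real.exp_add, Real.exp_add]
      ring
  have hhalf : ∀ x y, halfCoupling θ P J x y ≠ 0 → θ x ∉ P ∧ θ y ∉ P := fun x y hxy => by
    by_contra hc
    exact hxy (if_pos (by tauto))
  simp_rw [hsplit]
  refine integral_mul_comp_mul_exp_sum_nonneg μ h (fun j => mul_nonneg zero_le_two (hJ _ _))
    (hG.mul (measurable_pairEnergy _).exp)
    (M := M * Real.exp (∑ x, ∑ y, |halfCoupling θ P J x y|)) (fun φ => ?_)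
    (fun φ ψ hφψ => by simp only [F, hGP hφψ, pairEnergy_dependsOn _ hhalf hφψ])
    measurable_coordOn abs_coordOn_le_one
    fun j => (coordOn_dependsOn j).mono fun x hx => h.apply_notMem x hx
  rw [abs_mul, Real.abs_exp]
  exact mul_le_mul (hGM φ) (Real.exp_le_exp.2 ((le_abs_self _).trans (abs_pairEnergy_le _ _)))
    (Real.exp_pos _).le ((abs_nonneg _).trans (hGM φ))

end PairEnergy

section ZModReflection

variable {L : ℕ}

lemma ZMod.val_add_cases [NeZero L] (a b : ZMod L) :
    (a + b).val = a.val + b.val ∨ (a + b).val + L = a.val + b.val := by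
  rcases lt_or_ge (a.val + b.val) L with hab | hab
  · exact .inl (ZMod.val_add_of_lt hab)
  · have := ZMod.val_add_of_le hab
    omega

lemma ZMod.val_sub_cases [NeZero L] (a b : ZMod L) :
    (a - b).val + b.val = a.val ∨ (a - b).val + b.val = a.val + L := by
  have := ZMod.val_add_cases (a - b) b
  rw [sub_add_cancel] at this
  omega

/-- One open half of `ZMod L` for the reflection `t ↦ c - t`, whose mirror points are
`c / 2` and `(c + L) / 2`. -/
def reflSide (c : ZMod L) : Set (ZMod L) := {t | 2 * t.val < c.val ∨ c.val + L < 2 * t.val}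

instance (c : ZMod L) : DecidablePred (· ∈ reflSide c) := fun t =>
  inferInstanceAs (Decidable (2 * t.val < c.val ∨ c.val + L < 2 * t.val))

variable [NeZero L] {c t s : ZMod L}

lemma sub_notMem_reflSide (ht : t ∈ reflSide c) : c - t ∉ reflSide c := by
  have := ZMod.val_sub_cases c t
  have := t.val_lt
  have := (c - t).val_lt
  simp only [reflSide, Set.mem_ofPred_eq] at ht ⊢
  omega

lemma sub_eq_self_of_notMem_reflSide (ht : t ∉ reflSide c) (hct : c - t ∉ reflSide c) :
    c - t = t := by
  have := ZMod.val_sub_cases c t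
  simp only [reflSide, Set.mem_ofPred_eq] at ht hct
  exact ZMod.val_injective L (by omega)

lemma notMem_reflSide_self : c ∉ reflSide c := by
  have := c.val_lt
  simp only [reflSide, Set.mem_ofPred_eq]
  omega

lemma eq_sub_of_mem_reflSide (hL : 2 ≤ L) (ht : t ∈ reflSide c) (hs : c - s ∈ reflSide c)
    (hst : s = t + 1 ∨ s = t - 1) : s = c - t := by
  have hone : (1 : ZMod L).val = 1 := by
    rw [ZMod.val_one_eq_one_mod, Nat.mod_eq_of_lt hL]
  have := ZMod.val_sub_cases c t
  have := ZMod.val_sub_cases c s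
  have := c.val_lt
  have := t.val_lt
  have := s.val_lt
  have := (c - t).val_lt
  have := (c - s).val_lt
  have hs' : s.val = t.val + 1 ∨ s.val + L = t.val + 1 ∨ s.val + 1 = t.val ∨
      s.val + 1 = t.val + L := by
    rcases hst with rfl | rfl
    · have := ZMod.val_add_cases t 1
      omega
    · have := ZMod.val_sub_cases t 1
      omega
  simp only [reflSide, Set.mem_ofPred_eq] at ht hs
  refine ZMod.val_injective L ?_
  omega

end ZModReflection

section TorusReflection

variable {d L : ℕ}

lemma torusAdj_symm {x y : TorusPt d L} (h : torusAdj x y) : torusAdj y x := by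
  obtain ⟨j, rfl | rfl⟩ := h
  · exact ⟨j, .inr (by simp)⟩
  · exact ⟨j, .inl (by simp)⟩

lemma torusAdj_comm {x y : TorusPt d L} : torusAdj x y ↔ torusAdj y x :=
  ⟨torusAdj_symm, torusAdj_symm⟩

lemma torusAdj_add_right {x y : TorusPt d L} (w : TorusPt d L) (h : torusAdj x y) :
    torusAdj (x + w) (y + w) := by
  obtain ⟨j, rfl | rfl⟩ := h
  · refine ⟨j, .inl ?_⟩
    ext k
    by_cases hk : k = j <;> simp [hk]
    ring
  · refine ⟨j, .inr ?_⟩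
    ext k
    by_cases hk : k = j <;> simp [hk]
    ring

lemma torusAdj_add_right_iff (w x y : TorusPt d L) : torusAdj (x + w) (y + w) ↔ torusAdj x y :=
  ⟨fun h => by simpa using torusAdj_add_right (-w) h, torusAdj_add_right w⟩

def torusReflect (c : ZMod L) (i : Fin d) : Equiv.Perm (TorusPt d L) :=
  Function.Involutive.toPerm (fun x => Function.update x i (c - x i)) fun x => by simp

lemma torusReflect_apply (c : ZMod L) (i : Fin d) (x : TorusPt d L) :
    torusReflect c i x = Function.update x i (c - x i) := rfl

lemma torusAdj_torusReflect {x y : TorusPt d L} (c : ZMod L) (i : Fin d) (h : torusAdj x y) :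
    torusAdj (torusReflect c i x) (torusReflect c i y) := by
  obtain ⟨j, rfl | rfl⟩ := h <;> by_cases hji : j = i
  · subst hji
    refine ⟨j, .inr (funext fun k => ?_)⟩
    by_cases hk : k = j <;> simp [torusReflect_apply, Function.update_apply, hk]
    ring
  · refine ⟨j, .inl (funext fun k => ?_)⟩
    by_cases hk : k = j <;> by_cases hki : k = i <;>
      simp_all [torusReflect_apply, Function.update_apply]
  · subst hji
    refine ⟨j, .inl (funext fun k => ?_)⟩
    by_cases hk : k = j <;> simp [torusReflect_apply, Function.update_apply, hk]
    ring
  · refine ⟨j, .inr (funext fun k => ?_)⟩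
    by_cases hk : k = j <;> by_cases hki : k = i <;>
      simp_all [torusReflect_apply, Function.update_apply]

lemma torusAdj_torusReflect_iff (c : ZMod L) (i : Fin d) (x y : TorusPt d L) :
    torusAdj (torusReflect c i x) (torusReflect c i y) ↔ torusAdj x y :=
  ⟨fun h => by simpa [torusReflect_apply] using torusAdj_torusReflect c i h,
    torusAdj_torusReflect c i⟩

def torusHalf (c : ZMod L) (i : Fin d) : Set (TorusPt d L) := {x | x i ∈ reflSide c}

instance (c : ZMod L) (i : Fin d) : DecidablePred (· ∈ torusHalf c i) := fun x =>
  inferInstanceAs (Decidable (x i ∈ reflSide c))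

variable [NeZero L]

lemma isReflectionPartition_torusReflect (c : ZMod L) (i : Fin d) :
    IsReflectionPartition (torusReflect c i) (torusHalf c i) where
  involutive x := by simp [torusReflect_apply]
  apply_notMem x hx := by
    simpa [torusHalf, torusReflect_apply] using sub_notMem_reflSide hx
  apply_eq_self x hx hθx := by
    simp only [torusHalf, torusReflect_apply, Set.mem_ofPred_eq, Function.update_self] at hx hθx
    simp only [torusReflect_apply]
    rw [sub_eq_self_of_notMem_reflSide hx hθx, Function.update_eq_self]

lemma eq_torusReflect_of_torusAdj (hL : 2 ≤ L) {c : ZMod L} {i : Fin d} {x y : TorusPt d L}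
    (hx : x ∈ torusHalf c i) (hy : torusReflect c i y ∈ torusHalf c i) (hxy : torusAdj x y) :
    y = torusReflect c i x := by
  simp only [torusHalf, torusReflect_apply, Set.mem_ofPred_eq, Function.update_self] at hx hy
  obtain ⟨j, hj⟩ := hxy
  by_cases hji : j = i
  · subst hji
    have hyj : y j = c - x j :=
      eq_sub_of_mem_reflSide hL hx hy (by rcases hj with rfl | rfl <;> simp)
    rcases hj with rfl | rfl <;> simp_all [torusReflect_apply]
  · have hyi : y i = x i := by
      rcases hj with rfl | rfl <;> simp [Function.update_of_ne (Ne.symm hji)]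
    exact absurd (hyi ▸ hy) (sub_notMem_reflSide hx)

end TorusReflection

section SpinModel

variable {d L N : ℕ}

noncomputable def torusCoupling (β : ℝ) (x y : TorusPt d L) : ℝ :=
  if torusAdj x y then β / 2 else 0

lemma torusCoupling_symm_comp (β : ℝ) {e : Equiv.Perm (TorusPt d L)}
    (he : ∀ x y, torusAdj (e x) (e y) ↔ torusAdj x y) :
    (fun x y => torusCoupling β (e.symm x) (e.symm y)) = torusCoupling β := by
  funext x y
  simp only [torusCoupling, ← he (e.symm x), Equiv.apply_symm_apply]

lemma isProbabilityMeasure_sphereUniform (hN : 1 ≤ N) :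
    IsProbabilityMeasure (sphereUniform N) := by
  constructor
  rw [sphereUniform, Measure.smul_apply, smul_eq_mul]
  refine ENNReal.inv_mul_cancel ?_ (measure_ne_top _ _)
  rw [Measure.toSphere_apply_univ]
  refine mul_ne_zero ?_ (Metric.measure_ball_pos _ _ one_pos).ne'
  rw [finrank_euclideanSpace, Fintype.card_fin]
  exact Nat.cast_ne_zero.mpr (by omega)

variable [NeZero L]

lemma neg_mul_hamiltonian (β : ℝ) (φ : SpinCfg d L N) :
    -β * hamiltonian φ = pairEnergy (torusCoupling β) φ := by
  simp only [hamiltonian, pairEnergy, torusCoupling, Finset.mul_sum]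
  refine Finset.sum_congr rfl fun x _ => Finset.sum_congr rfl fun y _ => ?_
  split_ifs <;> ring

lemma hamiltonian_comp (e : Equiv.Perm (TorusPt d L))
    (he : ∀ x y, torusAdj (e x) (e y) ↔ torusAdj x y) (φ : SpinCfg d L N) :
    hamiltonian (φ ∘ e) = hamiltonian φ := by
  have h := neg_mul_hamiltonian (-1) (φ ∘ e)
  rw [pairEnergy_comp, torusCoupling_symm_comp _ he, ← neg_mul_hamiltonian] at h
  linarith

lemma isProbabilityMeasure_spinMeasure (hN : 1 ≤ N) :
    IsProbabilityMeasure (spinMeasure d L N) := by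
  have := isProbabilityMeasure_sphereUniform hN
  unfold spinMeasure
  infer_instance

lemma integral_comp_mul_exp_hamiltonian (hN : 1 ≤ N) (β : ℝ) {e : Equiv.Perm (TorusPt d L)}
    (he : ∀ x y, torusAdj (e x) (e y) ↔ torusAdj x y) (F : SpinCfg d L N → ℝ) :
    ∫ φ, F (φ ∘ e) * Real.exp (-β * hamiltonian φ) ∂spinMeasure d L N =
      ∫ φ, F φ * Real.exp (-β * hamiltonian φ) ∂spinMeasure d L N := by
  have := isProbabilityMeasure_sphereUniform hN
  simpa only [spinMeasure, hamiltonian_comp e he] using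
    integral_comp_perm (sphereUniform N) e fun φ => F φ * Real.exp (-β * hamiltonian φ)

lemma corrDot_comp (hN : 1 ≤ N) (β : ℝ) {e : Equiv.Perm (TorusPt d L)}
    (he : ∀ x y, torusAdj (e x) (e y) ↔ torusAdj x y) (x y : TorusPt d L) :
    corrDot d L N β (e x) (e y) = corrDot d L N β x y := by
  have hxy := integral_comp_mul_exp_hamiltonian hN β he fun φ =>
    ⟪(φ x : EuclideanSpace ℝ (Fin N)), (φ y : EuclideanSpace ℝ (Fin N))⟫
  simp only [Function.comp_apply] at hxy
  rw [corrDot, corrDot, gibbsExp, gibbsExp, hxy]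

lemma corrDot_comm (β : ℝ) (x y : TorusPt d L) : corrDot d L N β x y = corrDot d L N β y x := by
  simp only [corrDot, real_inner_comm]

lemma integrable_mul_exp_hamiltonian (hN : 1 ≤ N) (β : ℝ) {f : SpinCfg d L N → ℝ}
    (hf : Measurable f) {M : ℝ} (hfM : ∀ φ, |f φ| ≤ M) :
    Integrable (fun φ => f φ * Real.exp (-β * hamiltonian φ)) (spinMeasure d L N) := by
  have : IsProbabilityMeasure (spinMeasure d L N) := isProbabilityMeasure_spinMeasure hN
  simp only [neg_mul_hamiltonian]
  refine integrable_of_abs_le (hf.mul (measurable_pairEnergy _).exp)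
    (C := M * Real.exp (∑ x, ∑ y, |torusCoupling (d := d) (L := L) β x y|)) fun φ => ?_
  rw [abs_mul, Real.abs_exp]
  exact mul_le_mul (hfM φ) (Real.exp_le_exp.2 ((le_abs_self _).trans (abs_pairEnergy_le _ _)))
    (Real.exp_pos _).le ((abs_nonneg _).trans (hfM φ))

lemma integrable_inner_mul_exp_hamiltonian (hN : 1 ≤ N) (β : ℝ) (x y : TorusPt d L) :
    Integrable (fun φ : SpinCfg d L N =>
      ⟪(φ x : EuclideanSpace ℝ (Fin N)), (φ y : EuclideanSpace ℝ (Fin N))⟫ *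
        Real.exp (-β * hamiltonian φ)) (spinMeasure d L N) :=
  integrable_mul_exp_hamiltonian hN β (by fun_prop) (M := 1) fun φ => by
    simpa [norm_eq_of_mem_sphere] using
      abs_real_inner_le_norm (φ x : EuclideanSpace ℝ (Fin N)) (φ y)

lemma gibbsExp_inner_sub_sub (hN : 1 ≤ N) (β : ℝ) (x y z w : TorusPt d L) :
    gibbsExp d L N β (fun φ => ⟪(φ x : EuclideanSpace ℝ (Fin N)) - φ y,
      (φ z : EuclideanSpace ℝ (Fin N)) - φ w⟫) =
      corrDot d L N β x z - corrDot d L N β x w - corrDot d L N β y z + corrDot d L N β y w := by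
  set f : TorusPt d L → TorusPt d L → SpinCfg d L N → ℝ := fun a b φ =>
    ⟪(φ a : EuclideanSpace ℝ (Fin N)), (φ b : EuclideanSpace ℝ (Fin N))⟫ *
      Real.exp (-β * hamiltonian φ)
  have hint : ∀ a b, Integrable (f a b) (spinMeasure d L N) :=
    integrable_inner_mul_exp_hamiltonian hN β
  have hexpand : (fun φ : SpinCfg d L N => ⟪(φ x : EuclideanSpace ℝ (Fin N)) - φ y,
      (φ z : EuclideanSpace ℝ (Fin N)) - φ w⟫ * Real.exp (-β * hamiltonian φ)) =
      f x z - f x w - f y z + f y w := by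
    funext φ
    simp only [f, Pi.add_apply, Pi.sub_apply, inner_sub_left, inner_sub_right]
    ring
  simp only [corrDot, gibbsExp]
  rw [hexpand, integral_add' (((hint x z).sub (hint x w)).sub (hint y z)) (hint y w),
    integral_sub' ((hint x z).sub (hint x w)) (hint y z), integral_sub' (hint x z) (hint x w)]
  ring

theorem gibbsExp_inner_comp_torusReflect_nonneg (hL : 2 ≤ L) (hN : 1 ≤ N) {β : ℝ} (hβ : 0 ≤ β)
    (c : ZMod L) (i : Fin d) {G : SpinCfg d L N → EuclideanSpace ℝ (Fin N)} (hG : Measurable G)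
    {M : ℝ} (hGM : ∀ φ, ‖G φ‖ ≤ M) (hGP : DependsOn G {x | torusReflect c i x ∉ torusHalf c i}) :
    0 ≤ gibbsExp d L N β fun φ => ⟪G φ, G (φ ∘ torusReflect c i)⟫ := by
  have := isProbabilityMeasure_sphereUniform hN
  have hGk : ∀ k, Measurable fun φ => G φ k := fun k => by fun_prop
  have hGkM : ∀ k φ, |G φ k| ≤ M := fun k φ => by
    simpa using (PiLp.norm_apply_le (G φ) k).trans (hGM φ)
  have hθ : Measurable fun φ : SpinCfg d L N => φ ∘ torusReflect c i :=
    (measurePreserving_comp_perm (sphereUniform N) _).measurable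
  have hint : ∀ k, Integrable (fun φ => G φ k * G (φ ∘ torusReflect c i) k *
      Real.exp (-β * hamiltonian φ)) (spinMeasure d L N) := fun k =>
    integrable_mul_exp_hamiltonian hN β ((hGk k).mul ((hGk k).comp hθ)) (M := M * M) fun φ => by
      rw [abs_mul]
      exact mul_le_mul (hGkM k _) (hGkM k _) (abs_nonneg _) ((abs_nonneg _).trans (hGkM k φ))
  refine mul_nonneg (inv_nonneg.2 (integral_nonneg fun _ => (Real.exp_pos _).le)) ?_
  simp only [EuclideanSpace.real_inner_eq_sum_mul, Finset.sum_mul]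
  rw [integral_finsetSum _ fun k _ => hint k]
  refine Finset.sum_nonneg fun k _ => ?_
  simp only [neg_mul_hamiltonian]
  refine integral_mul_comp_mul_exp_pairEnergy_nonneg (sphereUniform N)
    (isReflectionPartition_torusReflect c i) (fun x y => ?_) (fun x y => ?_) (fun x y => ?_)
    (fun x y hx hy hxy => ?_) (hGk k) (hGkM k) (fun φ ψ hφψ => by rw [hGP hφψ])
  · unfold torusCoupling; split_ifs <;> linarith
  · simp only [torusCoupling, torusAdj_comm (x := y)]
  · simp only [torusCoupling, torusAdj_torusReflect_iff]
  · refine eq_torusReflect_of_torusAdj hL hx hy ?_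
    by_contra hadj
    exact hxy (if_neg hadj)

lemma corrDot_add_right (hN : 1 ≤ N) (β : ℝ) (w x y : TorusPt d L) :
    corrDot d L N β (x + w) (y + w) = corrDot d L N β x y :=
  corrDot_comp hN β (e := Equiv.addRight w) (torusAdj_add_right_iff w) x y

lemma torusReflect_notMem_torusHalf (c : ZMod L) {i : Fin d} {x : TorusPt d L} (hx : x i = 0) :
    torusReflect c i x ∉ torusHalf c i := by
  simpa [torusHalf, torusReflect_apply, hx] using notMem_reflSide_self

theorem two_mul_corrDot_torusReflect_le (hL : 2 ≤ L) (hN : 1 ≤ N) {β : ℝ} (hβ : 0 ≤ β)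
    (c : ZMod L) (i : Fin d) {x y : TorusPt d L} (hx : torusReflect c i x ∉ torusHalf c i)
    (hy : torusReflect c i y ∉ torusHalf c i) :
    2 * corrDot d L N β x (torusReflect c i y) ≤
      corrDot d L N β x (torusReflect c i x) + corrDot d L N β y (torusReflect c i y) := by
  have hRP := gibbsExp_inner_comp_torusReflect_nonneg hL hN hβ c i
    (G := fun φ => (φ x : EuclideanSpace ℝ (Fin N)) - φ y) (by fun_prop) (M := 2)
    (fun φ => (norm_sub_le _ _).trans (by simp [norm_eq_of_mem_sphere]; norm_num))
    (fun φ ψ h => by dsimp only; rw [h x hx, h y hy])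
  have hmixed :
      corrDot d L N β y (torusReflect c i x) = corrDot d L N β x (torusReflect c i y) := by
    rw [← corrDot_comp hN β (torusAdj_torusReflect_iff c i),
      (isReflectionPartition_torusReflect c i).involutive, corrDot_comm]
  simp only [Function.comp_apply, gibbsExp_inner_sub_sub hN, hmixed] at hRP
  linarith

end SpinModel

theorem spin_corr_le_axis_projection_general
    (d L N : ℕ) [NeZero L] (hL : Even L) (hN : 1 ≤ N)
    (β : ℝ) (hβ : 0 ≤ β) (z : TorusPt d L) (i : Fin d) :
    corrDot d L N β (torusOrigin d L) z ≤
      corrDot d L N β (torusOrigin d L) (fun k => if k = i then z i else 0) := by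
  have hL2 : 2 ≤ L := by
    obtain ⟨m, hm⟩ := hL
    have := NeZero.ne L
    omega
  set o := torusOrigin d L
  set z' : TorusPt d L := fun k => if k = i then z i else 0
  set w := Function.update z i 0
  have hθo : torusReflect (z i) i o = z' := by
    ext k; by_cases hk : k = i <;> simp [o, z', torusOrigin, torusReflect_apply, hk]
  have hθw : torusReflect (z i) i w = z := by
    ext k; by_cases hk : k = i <;> simp [w, torusReflect_apply, hk]
  have hRP := two_mul_corrDot_torusReflect_le (N := N) hL2 hN hβ (z i) i
    (torusReflect_notMem_torusHalf (z i) (x := o) rfl)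
    (torusReflect_notMem_torusHalf (z i) (x := w) (by simp [w]))
  have htrans := corrDot_add_right hN β w o z'
  rw [hθo, hθw] at hRP
  rw [show o + w = w from zero_add w,
    show z' + w = z by ext k; by_cases hk : k = i <;> simp [w, z', hk]] at htrans
  linarith

/-- **Site-monotonicity for the spin O(N) model (projection onto an axis).**
For every `z ∈ T_L` and coordinate direction `i`, the spin-spin correlation satisfies
`⟨φ_o ⬝ φ_z⟩ ≤ ⟨φ_o ⬝ φ_{z_i e_i}⟩`. -/
theorem spin_corr_le_axis_projection
    (d L N : ℕ) [NeZero L] (hd : 2 ≤ d) (hL : Even L) (hN : 1 ≤ N)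
    (β : ℝ) (hβ : 0 ≤ β) (z : TorusPt d L) (i : Fin d) :
    corrDot d L N β (torusOrigin d L) z ≤
      corrDot d L N β (torusOrigin d L) (fun k => if k = i then z i else 0) :=
  spin_corr_le_axis_projection_general d L N hL hN β hβ z i
end

section
/- Let Θ be the reflection through sites in a plane orthogonal to e_i, and let f, g be bounded measurable functions of the spins that depend only on the spins (φ_x)_{x ∈ T_L^+}. Then: (1) ⟨f · Θg⟩_{L,N,β} = ⟨g · Θf⟩_{L,N,β}; (2) ⟨f · Θf⟩_{L,N,β} ≥ 0; and consequently (3) ⟨f · Θg⟩_{L,N,β} ≤ ⟨f · Θf⟩_{L,N,β}^{1/2} · ⟨g · Θg⟩_{L,N,β}^{1/2}. -/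
open MeasureTheory Metric
open scoped RealInnerProductSpace BigOperators

/-- Reflection of torus sites through the plane of sites `{x : x_i = m}`:
`Θ(x)_i = 2m - x_i (mod L)` and the other coordinates are unchanged. -/
def reflSite {d L : ℕ} (i : Fin d) (m : ℕ) (x : TorusPt d L) : TorusPt d L :=
  Function.update x i (2 * (m : ZMod L) - x i)

/-- Membership in the half-torus `T_L^+ = {x : x_i - m (mod L) ∈ {0,…,L/2}}`. -/
def inPlusSite {d L : ℕ} (i : Fin d) (m : ℕ) (x : TorusPt d L) : Prop :=
  (x i - (m : ZMod L)).val ≤ L / 2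

/-- Membership in the other half-torus `T_L^- = Θ(T_L^+)`. -/
def inMinusSite {d L : ℕ} (i : Fin d) (m : ℕ) (x : TorusPt d L) : Prop :=
  inPlusSite i m (reflSite i m x)

/-- Membership in the fixed-point set `T_L^R = {x : x_i = m or x_i = m + L/2 (mod L)}`. -/
def inFixedSite {d L : ℕ} (i : Fin d) (m : ℕ) (x : TorusPt d L) : Prop :=
  (x i - (m : ZMod L)).val = 0 ∨ (x i - (m : ZMod L)).val = L / 2

instance {d L : ℕ} (i : Fin d) (m : ℕ) : DecidablePred (inPlusSite (d := d) (L := L) i m) :=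
  fun x => by unfold inPlusSite; infer_instance

instance {d L : ℕ} (i : Fin d) (m : ℕ) : DecidablePred (inMinusSite (d := d) (L := L) i m) :=
  fun x => by unfold inMinusSite inPlusSite; infer_instance

instance {d L : ℕ} (i : Fin d) (m : ℕ) : DecidablePred (inFixedSite (d := d) (L := L) i m) :=
  fun x => by unfold inFixedSite; infer_instance

/-- Reflection through sites acting on spin configurations: `(Θφ)_x = φ_{Θ(x)}`. -/
def reflSiteCfg {d L N : ℕ} (i : Fin d) (m : ℕ) (φ : SpinCfg d L N) : SpinCfg d L N :=
  fun x => φ (reflSite i m x)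

/-- The set `H_L` of vertices with all coordinates nonzero, together with the
nonzero points of the cartesian axes. -/
def inHL {d L : ℕ} (x : TorusPt d L) : Prop :=
  (∀ j, x j ≠ 0) ∨ ∃ i, x i ≠ 0 ∧ ∀ j, j ≠ i → x j = 0

/-- `ẑ_i = min(z_i, L - z_i)`, the torus distance of the `i`-th coordinate from `0`. -/
def hatCoord {d L : ℕ} (z : TorusPt d L) (i : Fin d) : ℕ :=
  min (z i).val (L - (z i).val)

/-- The box `Q_z = {x : ∀ i, x_i ≤ ẑ_i or x_i > L - ẑ_i}` with corner `z`. -/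
def inBoxQ {d L : ℕ} (z x : TorusPt d L) : Prop :=
  ∀ i, (x i).val ≤ hatCoord z i ∨ L - hatCoord z i < (x i).val

/-!
Every nearest-neighbour edge lies in `T⁺` or in `T⁻`, so the Boltzmann weight factors as
`e^{-βH} = W · ΘW`, where `W` only involves the spins in `T⁺` (edges inside `T^R` get weight
`1/2` in each factor). The sites split into `T^R`, `T⁺ \ T^R` and its mirror image
`Θ(T⁺ \ T^R)`; the product measure splits accordingly into three factors, the last two being
exchanged by `Θ`. Hence for `F = f W` the integral of `F · ΘF` equals
`∫ (∫ F dφ_{T⁺ \ T^R})² dφ_{T^R} ≥ 0`. Symmetry is the `Θ`-invariance of the measure and of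
`H`, and the last inequality is Cauchy–Schwarz for the positive semidefinite symmetric form
`(f, g) ↦ ⟨f · Θg⟩`.
-/

theorem le_sqrt_mul_sqrt_of_quadratic_nonneg {a b c : ℝ} (ha : 0 ≤ a)
    (h : ∀ t : ℝ, 0 ≤ a * (t * t) + 2 * b * t + c) : b ≤ √a * √c := by
  have hd := discrim_le_zero h
  rw [discrim] at hd
  rw [← Real.sqrt_mul ha]
  exact (le_abs_self b).trans (Real.abs_le_sqrt (by nlinarith))

theorem integral_mul_prod_prod_nonneg {X Y : Type*} [MeasurableSpace X] [MeasurableSpace Y]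
    (μ : Measure X) (ν : Measure Y) [SFinite μ] [SFinite ν] (K : X → Y → ℝ) :
    0 ≤ ∫ z, K z.1 z.2.1 * K z.1 z.2.2 ∂μ.prod (ν.prod ν) := by
  by_cases hK : Integrable (fun z : X × Y × Y => K z.1 z.2.1 * K z.1 z.2.2) (μ.prod (ν.prod ν))
  · rw [integral_prod _ hK]
    refine integral_nonneg fun x => ?_
    change 0 ≤ ∫ w, K x w.1 * K x w.2 ∂ν.prod ν
    rw [integral_prod_mul (K x) (K x)]
    exact mul_self_nonneg _
  · exact (integral_undef hK).ge

namespace ReflectionPositivity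

variable {ι : Type*} (θ : ι → ι) (A : ι → Prop) [DecidablePred A]

abbrev FixedSites := {x // A x ∧ A (θ x)}

abbrev MovedSites := {x // A x ∧ ¬A (θ x)}

variable {θ A}

/-- The third summand is embedded through `θ`, so `θ` exchanges the two copies of the moved
sites. -/
def splitEquiv (hθ : Function.Involutive θ) (hcover : ∀ x, A x ∨ A (θ x)) :
    FixedSites θ A ⊕ (MovedSites θ A ⊕ MovedSites θ A) ≃ ι where
  toFun := Sum.elim (↑) (Sum.elim (↑) (θ ∘ (↑)))
  invFun x :=
    if h : A x then
      if h' : A (θ x) then .inl ⟨x, h, h'⟩ else .inr (.inl ⟨x, h, h'⟩)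
    else .inr (.inr ⟨θ x, (hcover x).resolve_left h, by rwa [hθ x]⟩)
  left_inv := by
    rintro (⟨x, h, h'⟩ | ⟨x, h, h'⟩ | ⟨x, h, h'⟩) <;> simp [h, h', hθ x]
  right_inv x := by
    by_cases h : A x <;> by_cases h' : A (θ x) <;> simp [h, h', hθ x]

variable (S : Type*) [MeasurableSpace S]

def assemble (hθ : Function.Involutive θ) (hcover : ∀ x, A x ∨ A (θ x)) :
    (FixedSites θ A → S) × ((MovedSites θ A → S) × (MovedSites θ A → S)) ≃ᵐ (ι → S) :=
  ((MeasurableEquiv.refl _).prodCongr (MeasurableEquiv.sumPiEquivProdPi fun _ => S).symm).trans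
    ((MeasurableEquiv.sumPiEquivProdPi fun _ => S).symm.trans
      (MeasurableEquiv.piCongrLeft (fun _ => S) (splitEquiv hθ hcover)))

theorem assemble_apply_splitEquiv (hθ : Function.Involutive θ) (hcover : ∀ x, A x ∨ A (θ x))
    (z : (FixedSites θ A → S) × ((MovedSites θ A → S) × (MovedSites θ A → S)))
    (a : FixedSites θ A ⊕ (MovedSites θ A ⊕ MovedSites θ A)) :
    assemble S hθ hcover z (splitEquiv hθ hcover a) = Sum.elim z.1 (Sum.elim z.2.1 z.2.2) a := by
  rcases a with a | a | a <;>
  simp [assemble, MeasurableEquiv.piCongrLeft, Equiv.piCongrLeft_apply_apply,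
    MeasurableEquiv.coe_sumPiEquivProdPi_symm, MeasurableEquiv.prodCongr]

variable [Fintype ι] (ν : Measure S) [SigmaFinite ν]

theorem measurePreserving_assemble (hθ : Function.Involutive θ) (hcover : ∀ x, A x ∨ A (θ x)) :
    MeasurePreserving (assemble S hθ hcover)
      ((Measure.pi fun _ => ν).prod ((Measure.pi fun _ => ν).prod (Measure.pi fun _ => ν)))
      (Measure.pi fun _ => ν) :=
  ((MeasurePreserving.id (Measure.pi fun _ : FixedSites θ A => ν)).prod
      (measurePreserving_sumPiEquivProdPi_symm
        (ι := MovedSites θ A) (ι' := MovedSites θ A) fun _ => ν) :).trans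
    ((measurePreserving_sumPiEquivProdPi_symm fun _ => ν).trans
      (measurePreserving_piCongrLeft (fun _ => ν) _))

theorem integral_mul_comp_involutive_nonneg (hθ : Function.Involutive θ)
    (hcover : ∀ x, A x ∨ A (θ x)) (hfix : ∀ x, A x → A (θ x) → θ x = x) (F : (ι → S) → ℝ)
    (hF : ∀ φ ψ : ι → S, (∀ x, A x → φ x = ψ x) → F φ = F ψ) :
    0 ≤ ∫ φ, F φ * F (φ ∘ θ) ∂Measure.pi fun _ => ν := by
  have hU := assemble_apply_splitEquiv S hθ hcover
  have hleft : ∀ z, F (assemble S hθ hcover z) = F (assemble S hθ hcover (z.1, z.2.1, z.2.1)) :=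
    fun z => hF _ _ fun x hx => by
      obtain ⟨r | p | p, rfl⟩ := (splitEquiv hθ hcover).surjective x
      · rw [hU, hU]; rfl
      · rw [hU, hU]; rfl
      · exact absurd hx p.2.2
  have hright : ∀ z, F (assemble S hθ hcover z ∘ θ) =
      F (assemble S hθ hcover (z.1, z.2.2, z.2.2)) :=
    fun z => hF _ _ fun x hx => by
      obtain ⟨r | p | p, rfl⟩ := (splitEquiv hθ hcover).surjective x
      · rw [Function.comp_apply, hfix _ hx r.2.2, hU, hU]; rfl
      · change assemble S hθ hcover z (splitEquiv hθ hcover (.inr (.inr p))) = _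
        rw [hU, hU]; rfl
      · exact absurd hx p.2.2
  rw [← (measurePreserving_assemble S ν hθ hcover).integral_comp']
  simp only [hleft, hright]
  exact integral_mul_prod_prod_nonneg _ _ fun r p => F (assemble S hθ hcover (r, p, p))

theorem integral_comp_involutive (hθ : Function.Involutive θ) (G : (ι → S) → ℝ) :
    ∫ φ, G (φ ∘ θ) ∂Measure.pi (fun _ => ν) = ∫ φ, G φ ∂Measure.pi fun _ => ν :=
  (measurePreserving_arrowCongr' (fun _ => ν) (fun _ => ν) (hθ.toPerm θ) (.refl S)
    fun _ => .id ν).integral_comp' G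

end ReflectionPositivity

section HalfLine

variable {L : ℕ} [NeZero L]

theorem val_le_half_or_neg_val_le_half (w : ZMod L) : w.val ≤ L / 2 ∨ (-w).val ≤ L / 2 := by
  rw [ZMod.neg_val]
  have := ZMod.val_lt w
  split_ifs <;> omega

theorem two_mul_eq_zero_of_val_le_half {w : ZMod L} (hw : w.val ≤ L / 2)
    (hw' : (-w).val ≤ L / 2) : 2 * w = 0 := by
  rw [ZMod.neg_val] at hw'
  split_ifs at hw' with h0
  · rw [h0, mul_zero]
  · have := ZMod.val_lt w
    rw [← ZMod.natCast_zmod_val w, ← Nat.cast_ofNat, ← Nat.cast_mul,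
      show 2 * w.val = L by omega, ZMod.natCast_self]

theorem val_le_half_and_add_one_or_neg (hL : Even L) (w : ZMod L) :
    (w.val ≤ L / 2 ∧ (w + 1).val ≤ L / 2) ∨ ((-w).val ≤ L / 2 ∧ (-(w + 1)).val ≤ L / 2) := by
  have hw := ZMod.val_lt w
  have hL2 : 2 ≤ L := by obtain ⟨n, rfl⟩ := hL; have := NeZero.ne (n + n); omega
  have hLe : L / 2 + L / 2 = L := by obtain ⟨n, rfl⟩ := hL; omega
  have : Fact (1 < L) := ⟨hL2⟩
  rcases eq_or_lt_of_le (Nat.succ_le_of_lt hw) with hlast | hlt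
  · have h0 : w + 1 = 0 := by
      rw [← ZMod.natCast_zmod_val w, ← Nat.cast_succ, hlast, ZMod.natCast_self]
    right
    rw [h0, neg_zero, ZMod.val_zero, ZMod.neg_val, if_neg (by rintro rfl; simp at hlast; omega)]
    omega
  · have hsucc : (w + 1).val = w.val + 1 := by
      rw [ZMod.val_add_of_lt (by rwa [ZMod.val_one]), ZMod.val_one]
    have hne : w + 1 ≠ 0 := fun h => by simp [h] at hsucc
    rcases eq_or_ne w 0 with rfl | h0
    · left
      rw [hsucc, ZMod.val_zero]
      omega
    · rw [ZMod.neg_val, ZMod.neg_val, if_neg h0, if_neg hne, hsucc]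
      omega

end HalfLine

section Reflection

variable {d L N : ℕ} (i : Fin d) (m : ℕ)

theorem reflSite_involutive : Function.Involutive (reflSite (d := d) (L := L) i m) := by
  intro x
  funext k
  by_cases hk : k = i
  · subst hk; simp [reflSite]
  · simp [reflSite, hk]

theorem torusAdj_reflSite {x y : TorusPt d L} (h : torusAdj x y) :
    torusAdj (reflSite i m x) (reflSite i m y) := by
  obtain ⟨j, rfl | rfl⟩ := h <;> refine ⟨j, ?_⟩ <;> rcases eq_or_ne j i with rfl | hj
  · right; ext k; by_cases hk : k = j <;> simp [reflSite, Function.update_apply, hk]; ring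
  · left; ext k
    by_cases hk : k = j <;> by_cases hk' : k = i <;> simp_all [reflSite, Function.update_apply]
  · left; ext k; by_cases hk : k = j <;> simp [reflSite, Function.update_apply, hk]; ring
  · right; ext k
    by_cases hk : k = j <;> by_cases hk' : k = i <;> simp_all [reflSite, Function.update_apply]

theorem torusAdj_reflSite_iff {x y : TorusPt d L} :
    torusAdj (reflSite i m x) (reflSite i m y) ↔ torusAdj x y :=
  ⟨fun h => by simpa only [reflSite_involutive i m _] using torusAdj_reflSite i m h,
    torusAdj_reflSite i m⟩

theorem inPlusSite_reflSite_iff [NeZero L] {x : TorusPt d L} :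
    inPlusSite i m (reflSite i m x) ↔ (-(x i - m : ZMod L)).val ≤ L / 2 := by
  rw [inPlusSite, reflSite, Function.update_self,
    show 2 * (m : ZMod L) - x i - m = -(x i - m) by ring]

theorem inPlusSite_or_inPlusSite_reflSite [NeZero L] (x : TorusPt d L) :
    inPlusSite i m x ∨ inPlusSite i m (reflSite i m x) := by
  rw [inPlusSite_reflSite_iff]
  exact val_le_half_or_neg_val_le_half _

theorem reflSite_eq_self [NeZero L] {x : TorusPt d L} (hx : inPlusSite i m x)
    (hx' : inPlusSite i m (reflSite i m x)) : reflSite i m x = x := by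
  rw [inPlusSite_reflSite_iff] at hx'
  have h := two_mul_eq_zero_of_val_le_half hx hx'
  rw [reflSite, Function.update_eq_self_iff]
  linear_combination -h

theorem inPlusSite_and_or_of_torusAdj [NeZero L] (hL : Even L) {x y : TorusPt d L}
    (h : torusAdj x y) :
    (inPlusSite i m x ∧ inPlusSite i m y) ∨
      (inPlusSite i m (reflSite i m x) ∧ inPlusSite i m (reflSite i m y)) := by
  have step : ∀ (x : TorusPt d L) j,
      (inPlusSite i m x ∧ inPlusSite i m (Function.update x j (x j + 1))) ∨
      (inPlusSite i m (reflSite i m x) ∧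
        inPlusSite i m (reflSite i m (Function.update x j (x j + 1)))) := by
    intro x j
    rw [inPlusSite_reflSite_iff, inPlusSite_reflSite_iff]
    unfold inPlusSite
    rcases eq_or_ne j i with rfl | hj
    · rw [Function.update_self, show x j + 1 - m = x j - m + 1 by ring]
      exact val_le_half_and_add_one_or_neg hL _
    · rw [Function.update_of_ne hj.symm, and_self, and_self]
      exact val_le_half_or_neg_val_le_half _
  obtain ⟨j, rfl | rfl⟩ := h
  · exact step x j
  · have hx : Function.update (Function.update x j (x j - 1)) j
        (Function.update x j (x j - 1) j + 1) = x := by simp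
    have := step (Function.update x j (x j - 1)) j
    rw [hx] at this
    exact this.imp And.symm And.symm

noncomputable def bondTerm (φ : SpinCfg d L N) (x y : TorusPt d L) : ℝ :=
  if torusAdj x y then ⟪(φ x : EuclideanSpace ℝ (Fin N)), (φ y : EuclideanSpace ℝ (Fin N))⟫
  else 0

theorem bondTerm_reflSiteCfg (φ : SpinCfg d L N) (x y : TorusPt d L) :
    bondTerm (reflSiteCfg i m φ) (reflSite i m x) (reflSite i m y) = bondTerm φ x y := by
  simp only [bondTerm, reflSiteCfg, reflSite_involutive i m _, torusAdj_reflSite_iff]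

end Reflection

section Hamiltonian

variable {d L N : ℕ} [NeZero L] (i : Fin d) (m : ℕ)

theorem sum_sum_reflSite {M : Type*} [AddCommMonoid M] (F : TorusPt d L → TorusPt d L → M) :
    ∑ x, ∑ y, F (reflSite i m x) (reflSite i m y) = ∑ x, ∑ y, F x y := by
  let e : TorusPt d L ≃ TorusPt d L := (reflSite_involutive i m).toPerm _
  calc ∑ x, ∑ y, F (e x) (e y) = ∑ x, ∑ y, F (e x) y :=
        Finset.sum_congr rfl fun x _ => e.sum_comp (F (e x))
    _ = ∑ x, ∑ y, F x y := e.sum_comp fun x => ∑ y, F x y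

theorem hamiltonian_reflSiteCfg (φ : SpinCfg d L N) :
    hamiltonian (reflSiteCfg i m φ) = hamiltonian φ := by
  change -(1 / 2) * ∑ x, ∑ y, bondTerm _ x y = -(1 / 2) * ∑ x, ∑ y, bondTerm _ x y
  rw [← sum_sum_reflSite i m]
  simp only [bondTerm_reflSiteCfg]

noncomputable def plusShare (x y : TorusPt d L) : ℝ :=
  if inPlusSite i m x ∧ inPlusSite i m y then
    if inPlusSite i m (reflSite i m x) ∧ inPlusSite i m (reflSite i m y) then 1 / 2 else 1
  else 0

theorem plusShare_add_plusShare_reflSite (hL : Even L) {x y : TorusPt d L}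
    (h : torusAdj x y) :
    plusShare i m x y + plusShare i m (reflSite i m x) (reflSite i m y) = 1 := by
  have hsplit := inPlusSite_and_or_of_torusAdj i m hL h
  simp only [plusShare, reflSite_involutive i m _]
  by_cases hP : inPlusSite i m x ∧ inPlusSite i m y <;>
    by_cases hM : inPlusSite i m (reflSite i m x) ∧ inPlusSite i m (reflSite i m y)
  · simp only [hP, hM, and_self, if_true]; norm_num
  · simp [hP, hM]
  · simp [hP, hM]
  · exact absurd hsplit (by tauto)

noncomputable def halfHamiltonian (φ : SpinCfg d L N) : ℝ :=
  -(1 / 2) * ∑ x, ∑ y, plusShare i m x y * bondTerm φ x y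

theorem halfHamiltonian_add_halfHamiltonian_reflSiteCfg (hL : Even L)
    (φ : SpinCfg d L N) :
    halfHamiltonian i m φ + halfHamiltonian i m (reflSiteCfg i m φ) = hamiltonian φ := by
  have hshare : ∀ x y, (plusShare i m x y + plusShare i m (reflSite i m x) (reflSite i m y)) *
      bondTerm φ x y = bondTerm φ x y := fun x y => by
    by_cases h : torusAdj x y
    · rw [plusShare_add_plusShare_reflSite i m hL h, one_mul]
    · simp [bondTerm, h]
  have hrefl : halfHamiltonian i m (reflSiteCfg i m φ) =
      -(1 / 2) * ∑ x, ∑ y, plusShare i m (reflSite i m x) (reflSite i m y) * bondTerm φ x y := by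
    rw [halfHamiltonian, ← sum_sum_reflSite i m]
    simp only [bondTerm_reflSiteCfg]
  rw [hrefl, halfHamiltonian, ← mul_add, ← Finset.sum_add_distrib]
  simp only [← Finset.sum_add_distrib, ← add_mul, hshare]
  rfl

theorem halfHamiltonian_congr {φ ψ : SpinCfg d L N} (h : ∀ x, inPlusSite i m x → φ x = ψ x) :
    halfHamiltonian i m φ = halfHamiltonian i m ψ := by
  unfold halfHamiltonian
  congr 1
  refine Finset.sum_congr rfl fun x _ => Finset.sum_congr rfl fun y _ => ?_
  by_cases hxy : inPlusSite i m x ∧ inPlusSite i m y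
  · rw [bondTerm, bondTerm, h x hxy.1, h y hxy.2]
  · simp [plusShare, hxy]

end Hamiltonian

instance isFiniteMeasure_sphereUniform (N : ℕ) : IsFiniteMeasure (sphereUniform N) := by
  unfold sphereUniform
  infer_instance

instance isFiniteMeasure_spinMeasure (d L N : ℕ) [NeZero L] :
    IsFiniteMeasure (spinMeasure d L N) := by
  unfold spinMeasure
  infer_instance

section Gibbs

variable {d L N : ℕ} [NeZero L] (β : ℝ)

theorem continuous_hamiltonian : Continuous (hamiltonian (d := d) (L := L) (N := N)) := by
  refine continuous_const.mul
    (continuous_finsetSum _ fun x _ => continuous_finsetSum _ fun y _ => ?_)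
  split_ifs <;> fun_prop

theorem integrable_mul_boltzmann {u : SpinCfg d L N → ℝ}
    (hu : Integrable u (spinMeasure d L N)) :
    Integrable (fun φ => u φ * Real.exp (-β * hamiltonian φ)) (spinMeasure d L N) := by
  have hcont : Continuous fun φ : SpinCfg d L N => Real.exp (-β * hamiltonian φ) :=
    Real.continuous_exp.comp (continuous_const.mul continuous_hamiltonian)
  obtain ⟨C, hC⟩ := isCompact_univ.exists_bound_of_continuousOn hcont.continuousOn
  exact hu.mul_bdd hcont.aestronglyMeasurable (ae_of_all _ fun φ => hC φ trivial)

theorem gibbsExp_add {u v : SpinCfg d L N → ℝ} (hu : Integrable u (spinMeasure d L N))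
    (hv : Integrable v (spinMeasure d L N)) :
    gibbsExp d L N β (fun φ => u φ + v φ) = gibbsExp d L N β u + gibbsExp d L N β v := by
  simp only [gibbsExp, add_mul]
  rw [integral_add (integrable_mul_boltzmann β hu) (integrable_mul_boltzmann β hv), mul_add]

theorem gibbsExp_const_mul (c : ℝ) (u : SpinCfg d L N → ℝ) :
    gibbsExp d L N β (fun φ => c * u φ) = c * gibbsExp d L N β u := by
  simp only [gibbsExp, mul_assoc, integral_const_mul]
  ring

variable (i : Fin d) (m : ℕ)

theorem gibbsExp_mul_reflSiteCfg_comm (f g : SpinCfg d L N → ℝ) :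
    gibbsExp d L N β (fun φ => f φ * g (reflSiteCfg i m φ)) =
      gibbsExp d L N β (fun φ => g φ * f (reflSiteCfg i m φ)) := by
  unfold gibbsExp spinMeasure
  congr 1
  rw [← ReflectionPositivity.integral_comp_involutive _ _ (reflSite_involutive i m)]
  refine integral_congr_ae (ae_of_all _ fun φ => ?_)
  change f (reflSiteCfg i m φ) * g (reflSiteCfg i m (reflSiteCfg i m φ)) *
      Real.exp (-β * hamiltonian (reflSiteCfg i m φ)) = _
  rw [hamiltonian_reflSiteCfg, show reflSiteCfg i m (reflSiteCfg i m φ) = φ from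
    funext fun x => congrArg φ (reflSite_involutive i m x)]
  ring

theorem gibbsExp_mul_reflSiteCfg_self_nonneg (hL : Even L) {f : SpinCfg d L N → ℝ}
    (hf : ∀ φ ψ : SpinCfg d L N, (∀ x, inPlusSite i m x → φ x = ψ x) → f φ = f ψ) :
    0 ≤ gibbsExp d L N β (fun φ => f φ * f (reflSiteCfg i m φ)) := by
  refine mul_nonneg (inv_nonneg.2 (integral_nonneg fun _ => (Real.exp_pos _).le)) ?_
  let F φ := f φ * Real.exp (-β * halfHamiltonian i m φ)
  have hF : ∀ φ, f φ * f (reflSiteCfg i m φ) * Real.exp (-β * hamiltonian φ) =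
      F φ * F (reflSiteCfg i m φ) := fun φ => by
    rw [← halfHamiltonian_add_halfHamiltonian_reflSiteCfg i m hL, mul_add, Real.exp_add]
    ring
  simp only [hF]
  exact ReflectionPositivity.integral_mul_comp_involutive_nonneg _ _ (reflSite_involutive i m)
    (inPlusSite_or_inPlusSite_reflSite i m) (fun _ => reflSite_eq_self i m) F
    fun φ ψ h => by simp only [F, hf φ ψ h, halfHamiltonian_congr i m h]

theorem integrable_mul_reflSiteCfg {f g : SpinCfg d L N → ℝ} (hf : Measurable f)
    (hg : Measurable g) (hfb : ∃ C, ∀ φ, |f φ| ≤ C) (hgb : ∃ C, ∀ φ, |g φ| ≤ C) :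
    Integrable (fun φ => f φ * g (reflSiteCfg i m φ)) (spinMeasure d L N) := by
  obtain ⟨Cf, hCf⟩ := hfb
  obtain ⟨Cg, hCg⟩ := hgb
  have hrefl : Measurable (reflSiteCfg (L := L) (N := N) i m) :=
    measurable_pi_lambda _ fun x => measurable_pi_apply (reflSite i m x)
  refine .of_bound (hf.mul (hg.comp hrefl)).aestronglyMeasurable (Cf * Cg)
    (ae_of_all _ fun φ => ?_)
  rw [Real.norm_eq_abs, abs_mul]
  exact mul_le_mul (hCf _) (hCg _) (abs_nonneg _) ((abs_nonneg _).trans (hCf φ))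

theorem gibbsExp_mul_reflSiteCfg_expand {f g : SpinCfg d L N → ℝ} (hf : Measurable f)
    (hg : Measurable g) (hfb : ∃ C, ∀ φ, |f φ| ≤ C) (hgb : ∃ C, ∀ φ, |g φ| ≤ C) (t : ℝ) :
    gibbsExp d L N β
        (fun φ => (t * f φ + g φ) * (t * f (reflSiteCfg i m φ) + g (reflSiteCfg i m φ))) =
      gibbsExp d L N β (fun φ => f φ * f (reflSiteCfg i m φ)) * (t * t) +
        2 * gibbsExp d L N β (fun φ => f φ * g (reflSiteCfg i m φ)) * t +
          gibbsExp d L N β (fun φ => g φ * g (reflSiteCfg i m φ)) := by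
  have hff := integrable_mul_reflSiteCfg i m hf hf hfb hfb
  have hfg := integrable_mul_reflSiteCfg i m hf hg hfb hgb
  have hgf := integrable_mul_reflSiteCfg i m hg hf hgb hfb
  have hgg := integrable_mul_reflSiteCfg i m hg hg hgb hgb
  have hexpand : (fun φ => (t * f φ + g φ) * (t * f (reflSiteCfg i m φ) + g (reflSiteCfg i m φ)))
      = fun φ => t * t * (f φ * f (reflSiteCfg i m φ)) + (t * (f φ * g (reflSiteCfg i m φ)) +
        (t * (g φ * f (reflSiteCfg i m φ)) + g φ * g (reflSiteCfg i m φ))) := by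
    funext φ
    ring
  rw [hexpand, gibbsExp_add β (hff.const_mul _), gibbsExp_add β (hfg.const_mul _),
    gibbsExp_add β (hgf.const_mul _) hgg, gibbsExp_const_mul, gibbsExp_const_mul,
    gibbsExp_const_mul, gibbsExp_mul_reflSiteCfg_comm β i m g f]
  · ring
  · exact (hgf.const_mul _).add hgg
  · exact (hfg.const_mul _).add ((hgf.const_mul _).add hgg)

end Gibbs

theorem spin_site_reflection_positivity_general
    (d L N : ℕ) [NeZero L] (hL : Even L)
    (β : ℝ) (i : Fin d) (m : ℕ)
    (f g : SpinCfg d L N → ℝ)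
    (hfmeas : Measurable f) (hgmeas : Measurable g)
    (hfbdd : ∃ C : ℝ, ∀ φ, |f φ| ≤ C) (hgbdd : ∃ C : ℝ, ∀ φ, |g φ| ≤ C)
    (hfplus : ∀ φ ψ : SpinCfg d L N, (∀ x, inPlusSite i m x → φ x = ψ x) → f φ = f ψ)
    (hgplus : ∀ φ ψ : SpinCfg d L N, (∀ x, inPlusSite i m x → φ x = ψ x) → g φ = g ψ) :
    gibbsExp d L N β (fun φ => f φ * g (reflSiteCfg i m φ)) =
        gibbsExp d L N β (fun φ => g φ * f (reflSiteCfg i m φ)) ∧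
      0 ≤ gibbsExp d L N β (fun φ => f φ * f (reflSiteCfg i m φ)) ∧
      gibbsExp d L N β (fun φ => f φ * g (reflSiteCfg i m φ)) ≤
        Real.sqrt (gibbsExp d L N β (fun φ => f φ * f (reflSiteCfg i m φ))) *
          Real.sqrt (gibbsExp d L N β (fun φ => g φ * g (reflSiteCfg i m φ))) := by
  have hff := gibbsExp_mul_reflSiteCfg_self_nonneg β i m hL hfplus
  refine ⟨gibbsExp_mul_reflSiteCfg_comm β i m f g, hff,
    le_sqrt_mul_sqrt_of_quadratic_nonneg hff fun t => ?_⟩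
  rw [← gibbsExp_mul_reflSiteCfg_expand β i m hfmeas hgmeas hfbdd hgbdd t]
  exact gibbsExp_mul_reflSiteCfg_self_nonneg β i m hL fun φ ψ h => by
    rw [hfplus φ ψ h, hgplus φ ψ h]

/-- **Reflection positivity through sites for the spin O(N) model.**
For the reflection `Θ` through sites in a plane orthogonal to `e_i` and bounded measurable
functions `f, g` depending only on the spins in `T_L^+`:
(1) `⟨f·Θg⟩ = ⟨g·Θf⟩`; (2) `⟨f·Θf⟩ ≥ 0`; (3) `⟨f·Θg⟩ ≤ ⟨f·Θf⟩^{1/2} ⟨g·Θg⟩^{1/2}`. -/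
theorem spin_site_reflection_positivity
    (d L N : ℕ) [NeZero L] (hd : 2 ≤ d) (hL : Even L) (hN : 1 ≤ N)
    (β : ℝ) (hβ : 0 ≤ β) (i : Fin d) (m : ℕ) (hm : m < L)
    (f g : SpinCfg d L N → ℝ)
    (hfmeas : Measurable f) (hgmeas : Measurable g)
    (hfbdd : ∃ C : ℝ, ∀ φ, |f φ| ≤ C) (hgbdd : ∃ C : ℝ, ∀ φ, |g φ| ≤ C)
    (hfplus : ∀ φ ψ : SpinCfg d L N, (∀ x, inPlusSite i m x → φ x = ψ x) → f φ = f ψ)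
    (hgplus : ∀ φ ψ : SpinCfg d L N, (∀ x, inPlusSite i m x → φ x = ψ x) → g φ = g ψ) :
    gibbsExp d L N β (fun φ => f φ * g (reflSiteCfg i m φ)) =
        gibbsExp d L N β (fun φ => g φ * f (reflSiteCfg i m φ)) ∧
      0 ≤ gibbsExp d L N β (fun φ => f φ * f (reflSiteCfg i m φ)) ∧
      gibbsExp d L N β (fun φ => f φ * g (reflSiteCfg i m φ)) ≤
        Real.sqrt (gibbsExp d L N β (fun φ => f φ * f (reflSiteCfg i m φ))) *
          Real.sqrt (gibbsExp d L N β (fun φ => g φ * g (reflSiteCfg i m φ))) :=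
  spin_site_reflection_positivity_general d L N hL β i m f g hfmeas hgmeas hfbdd hgbdd hfplus hgplus
end

section
/- Let Θ be the reflection through sites in a plane orthogonal to e_i. For any x ∈ T_L^+ ∖ T_L^R and any y ∈ T_L^- ∖ T_L^R, one has ⟨φ_x^1 φ_y^1⟩_{L,N,β} ≤ (1/2) ( ⟨φ_x^1 φ_{Θ(x)}^1⟩_{L,N,β} + ⟨φ_{Θ(y)}^1 φ_y^1⟩_{L,N,β} ). -/
open MeasureTheory Metric
open scoped RealInnerProductSpace BigOperators

set_option linter.unusedSectionVars false
namespace RPaux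

open Finset

variable {d L : ℕ} [NeZero L]

lemma reflSite_i (i : Fin d) (m : ℕ) (x : TorusPt d L) :
    reflSite i m x i = 2 * (m : ZMod L) - x i := Function.update_self _ _ _

lemma reflSite_ne (i : Fin d) (m : ℕ) (x : TorusPt d L) {j : Fin d} (h : j ≠ i) :
    reflSite i m x j = x j := Function.update_of_ne h _ _

lemma reflSite_invol (i : Fin d) (m : ℕ) (x : TorusPt d L) :
    reflSite i m (reflSite i m x) = x := by
  unfold reflSite
  rw [Function.update_self, Function.update_idem]
  have h : 2 * (m : ZMod L) - (2 * (m : ZMod L) - x i) = x i := by ring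
  rw [h, Function.update_eq_self]

lemma refl_val (i : Fin d) (m : ℕ) (x : TorusPt d L) :
    ((reflSite i m x i) - (m : ZMod L)).val
      = if (x i - (m : ZMod L)).val = 0 then 0 else L - (x i - (m : ZMod L)).val := by
  have h1 : reflSite i m x i - (m : ZMod L) = -(x i - (m : ZMod L)) := by
    rw [reflSite_i]; ring
  rw [h1, ZMod.neg_val]
  by_cases h : x i - (m : ZMod L) = 0
  · simp [h]
  · rw [if_neg h, if_neg (fun hv => h ((ZMod.val_eq_zero _).mp hv))]

lemma refl_update_ne (i : Fin d) (m : ℕ) (x : TorusPt d L) {j : Fin d} (h : j ≠ i) (c : ZMod L) :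
    reflSite i m (Function.update x j c) = Function.update (reflSite i m x) j c := by
  unfold reflSite
  rw [Function.update_of_ne (Ne.symm h) c x, Function.update_comm (Ne.symm h)]

lemma refl_update_eq (i : Fin d) (m : ℕ) (x : TorusPt d L) (c : ZMod L) :
    reflSite i m (Function.update x i c)
      = Function.update (reflSite i m x) i (2 * (m : ZMod L) - c) := by
  unfold reflSite
  rw [Function.update_self, Function.update_idem, Function.update_idem]

lemma adj_refl (i : Fin d) (m : ℕ) {x y : TorusPt d L} (h : torusAdj x y) :
    torusAdj (reflSite i m x) (reflSite i m y) := by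
  obtain ⟨j, hj | hj⟩ := h
  · by_cases hji : j = i
    · subst hji
      refine ⟨j, Or.inr ?_⟩
      rw [hj, refl_update_eq, reflSite_i]
      ring_nf
    · refine ⟨j, Or.inl ?_⟩
      rw [hj, refl_update_ne i m x hji, reflSite_ne i m x hji]
  · by_cases hji : j = i
    · subst hji
      refine ⟨j, Or.inl ?_⟩
      rw [hj, refl_update_eq, reflSite_i]
      ring_nf
    · refine ⟨j, Or.inr ?_⟩
      rw [hj, refl_update_ne i m x hji, reflSite_ne i m x hji]

lemma adj_refl_iff (i : Fin d) (m : ℕ) (x y : TorusPt d L) :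
    torusAdj (reflSite i m x) (reflSite i m y) ↔ torusAdj x y := by
  constructor
  · intro h
    have := adj_refl i m h
    rwa [reflSite_invol, reflSite_invol] at this
  · exact adj_refl i m

end RPaux
namespace RPaux

open Finset

variable {d L : ℕ} [NeZero L]

lemma val_add_one (hL : Even L) (a : ZMod L) :
    (a + 1).val = if a.val = L - 1 then 0 else a.val + 1 := by
  have hL2 : 2 ≤ L := by
    rcases hL with ⟨k, hk⟩
    have := NeZero.ne L
    omega
  haveI : Fact (1 < L) := ⟨by omega⟩
  rw [ZMod.val_add, ZMod.val_one]
  have ha : a.val < L := ZMod.val_lt a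
  split_ifs with h
  · rw [h, Nat.sub_add_cancel (by omega), Nat.mod_self]
  · exact Nat.mod_eq_of_lt (by omega)

/-- The reflection-positivity edge weight for the positive half-torus. -/
noncomputable def eW (i : Fin d) (m : ℕ) (x y : TorusPt d L) : ℝ :=
  if torusAdj x y ∧ inPlusSite i m x ∧ inPlusSite i m y then
    (if inFixedSite i m x ∧ inFixedSite i m y then 1 / 2 else 1) else 0

lemma eW_add_refl (hL : Even L) (i : Fin d) (m : ℕ) (x y : TorusPt d L) :
    eW i m x y + eW i m (reflSite i m x) (reflSite i m y)
      = if torusAdj x y then 1 else 0 := by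
  by_cases hadj : torusAdj x y
  · have hadj' := adj_refl i m (x := x) (y := y) hadj
    have hL2 : 2 ≤ L := by
      rcases hL with ⟨k, hk⟩; have := NeZero.ne L; omega
    have hLmod : L % 2 = 0 := Nat.even_iff.mp hL
    set va := (x i - (m : ZMod L)).val with hva
    set vb := (y i - (m : ZMod L)).val with hvb
    have hrxa : va = 0 → (reflSite i m x i - (m : ZMod L)).val = 0 := by
      intro h; rw [refl_val, ← hva, if_pos h]
    have hrxb : ¬ va = 0 → (reflSite i m x i - (m : ZMod L)).val = L - va := by
      intro h; rw [refl_val, ← hva, if_neg h]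
    have hrya : vb = 0 → (reflSite i m y i - (m : ZMod L)).val = 0 := by
      intro h; rw [refl_val, ← hvb, if_pos h]
    have hryb : ¬ vb = 0 → (reflSite i m y i - (m : ZMod L)).val = L - vb := by
      intro h; rw [refl_val, ← hvb, if_neg h]
    have hva' : va < L := ZMod.val_lt _
    have hvb' : vb < L := ZMod.val_lt _
    -- adjacency relation between va and vb
    have hrel : vb = va ∨ (va = L - 1 ∧ vb = 0) ∨ vb = va + 1
        ∨ (vb = L - 1 ∧ va = 0) ∨ va = vb + 1 := by
      obtain ⟨j, hj | hj⟩ := hadj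
      · by_cases hji : j = i
        · rw [hji] at hj
          have h1 : y i - (m : ZMod L) = (x i - (m : ZMod L)) + 1 := by
            rw [hj, Function.update_self]; ring
          have h2 : vb = if va = L - 1 then 0 else va + 1 := by
            rw [hvb, h1, val_add_one hL, ← hva]
          split_ifs at h2 with h3
          · right; left; exact ⟨h3, h2⟩
          · right; right; left; exact h2
        · left
          rw [hvb, hj, Function.update_of_ne (Ne.symm hji)]
      · by_cases hji : j = i
        · rw [hji] at hj
          have h1 : x i - (m : ZMod L) = (y i - (m : ZMod L)) + 1 := by
            rw [hj, Function.update_self]; ring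
          have h2 : va = if vb = L - 1 then 0 else vb + 1 := by
            rw [hva, h1, val_add_one hL, ← hvb]
          split_ifs at h2 with h3
          · right; right; right; left; exact ⟨h3, h2⟩
          · right; right; right; right; exact h2
        · left
          rw [hvb, hj, Function.update_of_ne (Ne.symm hji)]
    simp only [eW, inPlusSite, inFixedSite, hadj, hadj', true_and, if_true, ← hva, ← hvb]
    by_cases h0a : va = 0 <;> by_cases h0b : vb = 0
    · simp only [hrxa h0a, hrya h0b, true_or, true_and, or_true, and_true, Nat.zero_le, if_true]
      split_ifs <;> first | omega | (norm_num; done)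
    · simp only [hrxa h0a, hryb h0b, true_or, true_and, or_true, and_true, Nat.zero_le, if_true]
      split_ifs <;> first | omega | (norm_num; done)
    · simp only [hrxb h0a, hrya h0b, true_or, true_and, or_true, and_true, Nat.zero_le, if_true]
      split_ifs <;> first | omega | (norm_num; done)
    · simp only [hrxb h0a, hryb h0b, true_or, true_and, or_true, and_true, Nat.zero_le, if_true]
      split_ifs <;> first | omega | (norm_num; done)
  · have hadj' : ¬ torusAdj (reflSite i m x) (reflSite i m y) := by
      rw [adj_refl_iff]; exact hadj
    simp [eW, hadj, hadj']

end RPaux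
namespace RPaux

open Finset

variable {d L N : ℕ} [NeZero L]

/-- Half-torus Hamiltonian. -/
noncomputable def Hp (i : Fin d) (m : ℕ) (φ : SpinCfg d L N) : ℝ :=
  -(1 / 2) * ∑ x : TorusPt d L, ∑ y : TorusPt d L,
    eW i m x y * ⟪(φ x : EuclideanSpace ℝ (Fin N)), (φ y : EuclideanSpace ℝ (Fin N))⟫

/-- The reflection through sites as a permutation of the torus. -/
def reflPerm (i : Fin d) (m : ℕ) : Equiv.Perm (TorusPt d L) :=
  Function.Involutive.toPerm (reflSite i m) (reflSite_invol i m)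

lemma ham_split (hL : Even L) (i : Fin d) (m : ℕ) (φ : SpinCfg d L N) :
    hamiltonian φ = Hp i m φ + Hp i m (reflSiteCfg i m φ) := by
  unfold hamiltonian Hp reflSiteCfg
  have reidx : ∑ x : TorusPt d L, ∑ y : TorusPt d L,
      eW i m x y * ⟪(φ (reflSite i m x) : EuclideanSpace ℝ (Fin N)),
        (φ (reflSite i m y) : EuclideanSpace ℝ (Fin N))⟫
      = ∑ x : TorusPt d L, ∑ y : TorusPt d L,
      eW i m (reflSite i m x) (reflSite i m y)
        * ⟪(φ x : EuclideanSpace ℝ (Fin N)), (φ y : EuclideanSpace ℝ (Fin N))⟫ := by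
    refine Fintype.sum_equiv (reflPerm i m) _ _ fun x => ?_
    refine Fintype.sum_equiv (reflPerm i m) _ _ fun y => ?_
    have hx : reflSite i m (reflPerm i m x) = x := reflSite_invol i m x
    have hy : reflSite i m (reflPerm i m y) = y := reflSite_invol i m y
    show eW i m x y * _ = eW i m (reflSite i m (reflPerm i m x)) (reflSite i m (reflPerm i m y)) * _
    rw [hx, hy]
    rfl
  rw [reidx, ← mul_add, ← Finset.sum_add_distrib]
  congr 1
  refine Finset.sum_congr rfl fun x _ => ?_
  rw [← Finset.sum_add_distrib]
  refine Finset.sum_congr rfl fun y _ => ?_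
  rw [← add_mul, eW_add_refl hL]
  split_ifs <;> simp

lemma Hp_congr (i : Fin d) (m : ℕ) (φ ψ : SpinCfg d L N)
    (h : ∀ z, inPlusSite i m z → φ z = ψ z) : Hp i m φ = Hp i m ψ := by
  unfold Hp
  congr 1
  refine Finset.sum_congr rfl fun x _ => Finset.sum_congr rfl fun y _ => ?_
  by_cases hc : torusAdj x y ∧ inPlusSite i m x ∧ inPlusSite i m y
  · rw [h x hc.2.1, h y hc.2.2]
  · simp [eW, hc]

lemma refl_fixed (hL : Even L) (i : Fin d) (m : ℕ) (z : TorusPt d L)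
    (hz : inFixedSite i m z) : reflSite i m z = z := by
  have h2 : 2 * (z i - (m : ZMod L)) = 0 := by
    rcases hz with h | h
    · rw [(ZMod.val_eq_zero _).mp h]; ring
    · have ha : z i - (m : ZMod L) = ((L / 2 : ℕ) : ZMod L) := by
        rw [← h]
        exact (ZMod.natCast_rightInverse (z i - (m : ZMod L))).symm
      rw [ha, ← Nat.cast_ofNat (n := 2), ← Nat.cast_mul]
      have : 2 * (L / 2) = L := by
        have := Nat.even_iff.mp hL; omega
      rw [this, ZMod.natCast_self]
  have h3 : 2 * (m : ZMod L) - z i = z i := by linear_combination -h2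
  unfold reflSite
  rw [h3, Function.update_eq_self]

lemma mem_B_of_minus (hL : Even L) (i : Fin d) (m : ℕ) (z : TorusPt d L)
    (h1 : inMinusSite i m z) (h2 : ¬ inFixedSite i m z) : ¬ inPlusSite i m z := by
  have hL2 : 2 ≤ L := by
    rcases hL with ⟨k, hk⟩; have := NeZero.ne L; omega
  have hLmod : L % 2 = 0 := Nat.even_iff.mp hL
  unfold inMinusSite inPlusSite at h1
  unfold inFixedSite at h2
  push_neg at h2
  unfold inPlusSite
  have hv : (z i - (m : ZMod L)).val < L := ZMod.val_lt _
  by_cases h0 : (z i - (m : ZMod L)).val = 0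
  · exact absurd h0 h2.1
  · rw [refl_val, if_neg h0] at h1
    omega

lemma mem_A_of_B (hL : Even L) (i : Fin d) (m : ℕ) (z : TorusPt d L)
    (h1 : ¬ inPlusSite i m z) :
    inPlusSite i m (reflSite i m z) ∧ ¬ inFixedSite i m (reflSite i m z) := by
  have hL2 : 2 ≤ L := by
    rcases hL with ⟨k, hk⟩; have := NeZero.ne L; omega
  have hLmod : L % 2 = 0 := Nat.even_iff.mp hL
  unfold inPlusSite at h1 ⊢
  unfold inFixedSite
  have hv : (z i - (m : ZMod L)).val < L := ZMod.val_lt _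
  have h0 : ¬ (z i - (m : ZMod L)).val = 0 := by omega
  rw [refl_val, if_neg h0]
  push_neg
  omega

lemma mem_B_of_A (hL : Even L) (i : Fin d) (m : ℕ) (z : TorusPt d L)
    (h1 : inPlusSite i m z) (h2 : ¬ inFixedSite i m z) :
    ¬ inPlusSite i m (reflSite i m z) := by
  have hL2 : 2 ≤ L := by
    rcases hL with ⟨k, hk⟩; have := NeZero.ne L; omega
  have hLmod : L % 2 = 0 := Nat.even_iff.mp hL
  unfold inPlusSite at h1 ⊢
  unfold inFixedSite at h2
  push_neg at h2
  have hv : (z i - (m : ZMod L)).val < L := ZMod.val_lt _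
  rw [refl_val, if_neg h2.1]
  omega

end RPaux
namespace RPaux

open Finset
open scoped ENNReal

noncomputable instance sphereProb (N : ℕ) [NeZero N] :
    IsProbabilityMeasure (sphereUniform N) := by
  have hfin : IsFiniteMeasure ((volume : Measure (EuclideanSpace ℝ (Fin N))).toSphere) :=
    inferInstance
  have hne : NeZero ((volume : Measure (EuclideanSpace ℝ (Fin N))).toSphere) := by
    refine ⟨fun h0 => ?_⟩
    have h1 : ((volume : Measure (EuclideanSpace ℝ (Fin N))).toSphere) Set.univ = 0 := by
      rw [h0]; rfl
    rw [Measure.toSphere_apply_univ] at h1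
    have h2 : (volume : Measure (EuclideanSpace ℝ (Fin N))) (Metric.ball 0 1) ≠ 0 :=
      (measure_ball_pos _ _ one_pos).ne'
    have h3 : ((Module.finrank ℝ (EuclideanSpace ℝ (Fin N)) : ℕ) : ℝ≥0∞) ≠ 0 := by
      rw [finrank_euclideanSpace_fin]
      exact Nat.cast_ne_zero.mpr (NeZero.ne N)
    exact (mul_ne_zero h3 h2) h1
  unfold sphereUniform
  infer_instance

end RPaux
namespace RPaux

open Finset

variable {d L N : ℕ} [NeZero L] [NeZero N]

abbrev IdxP (d L : ℕ) (i : Fin d) (m : ℕ) := {z : TorusPt d L // inPlusSite i m z}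
abbrev IdxR (d L : ℕ) (i : Fin d) (m : ℕ) := {z : IdxP d L i m // inFixedSite i m z.val}
abbrev IdxA (d L : ℕ) (i : Fin d) (m : ℕ) := {z : IdxP d L i m // ¬ inFixedSite i m z.val}
abbrev IdxB (d L : ℕ) (i : Fin d) (m : ℕ) := {z : TorusPt d L // ¬ inPlusSite i m z}

def eAB (i : Fin d) (m : ℕ) (hL : Even L) : IdxA d L i m ≃ IdxB d L i m where
  toFun z := ⟨reflSite i m z.val.val, mem_B_of_A hL i m _ z.val.prop z.prop⟩
  invFun b := ⟨⟨reflSite i m b.val, (mem_A_of_B hL i m _ b.prop).1⟩,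
    (mem_A_of_B hL i m _ b.prop).2⟩
  left_inv z := by
    apply Subtype.ext; apply Subtype.ext
    exact reflSite_invol i m z.val.val
  right_inv b := by
    apply Subtype.ext
    exact reflSite_invol i m b.val

noncomputable def s0 (N : ℕ) [NeZero N] : SpinSphere N :=
  ⟨EuclideanSpace.single (0 : Fin N) 1, by
    rw [mem_sphere_zero_iff_norm, EuclideanSpace.norm_single]
    norm_num⟩

noncomputable def glue (i : Fin d) (m : ℕ) (r : IdxR d L i m → SpinSphere N)
    (a : IdxA d L i m → SpinSphere N) : SpinCfg d L N :=
  fun z => if h1 : inPlusSite i m z then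
    (if h2 : inFixedSite i m z then r ⟨⟨z, h1⟩, h2⟩ else a ⟨⟨z, h1⟩, h2⟩) else s0 N

noncomputable def cf (u : TorusPt d L) (φ : SpinCfg d L N) : ℝ :=
  (φ u : EuclideanSpace ℝ (Fin N)) 0

lemma sphere_norm (s : SpinSphere N) : ‖(s : EuclideanSpace ℝ (Fin N))‖ = 1 := by
  simpa [mem_sphere_zero_iff_norm] using s.2

lemma cf_abs_le (u : TorusPt d L) (φ : SpinCfg d L N) : |cf u φ| ≤ 1 := by
  have h : cf u φ
      = ⟪EuclideanSpace.single (0 : Fin N) (1 : ℝ), (φ u : EuclideanSpace ℝ (Fin N))⟫ := by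
    rw [EuclideanSpace.inner_single_left]; simp [cf]
  rw [h]
  calc |⟪EuclideanSpace.single (0 : Fin N) (1 : ℝ), (φ u : EuclideanSpace ℝ (Fin N))⟫|
      ≤ ‖EuclideanSpace.single (0 : Fin N) (1 : ℝ)‖ * ‖(φ u : EuclideanSpace ℝ (Fin N))‖ :=
        abs_real_inner_le_norm _ _
    _ ≤ 1 := by rw [EuclideanSpace.norm_single, sphere_norm]; norm_num

lemma eW_abs_le (i : Fin d) (m : ℕ) (x y : TorusPt d L) : |eW i m x y| ≤ 1 := by
  unfold eW
  split_ifs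
  · rw [abs_of_nonneg (by norm_num : (0:ℝ) ≤ 1/2)]; norm_num
  · rw [abs_of_nonneg (by norm_num : (0:ℝ) ≤ 1)]
  · simp

lemma inner_abs_le (s t : SpinSphere N) :
    |⟪(s : EuclideanSpace ℝ (Fin N)), (t : EuclideanSpace ℝ (Fin N))⟫| ≤ 1 := by
  calc |⟪(s : EuclideanSpace ℝ (Fin N)), (t : EuclideanSpace ℝ (Fin N))⟫|
      ≤ ‖(s : EuclideanSpace ℝ (Fin N))‖ * ‖(t : EuclideanSpace ℝ (Fin N))‖ :=
        abs_real_inner_le_norm _ _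
    _ ≤ 1 := by rw [sphere_norm, sphere_norm]; norm_num

/-- Uniform bound for the half-Hamiltonian. -/
noncomputable def HpB (d L : ℕ) [NeZero L] : ℝ := (Fintype.card (TorusPt d L) : ℝ) ^ 2 / 2

lemma Hp_abs_le (i : Fin d) (m : ℕ) (φ : SpinCfg d L N) : |Hp i m φ| ≤ HpB d L := by
  unfold Hp HpB
  rw [abs_mul]
  have h1 : |∑ x : TorusPt d L, ∑ y : TorusPt d L,
      eW i m x y * ⟪(φ x : EuclideanSpace ℝ (Fin N)), (φ y : EuclideanSpace ℝ (Fin N))⟫|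
      ≤ (Fintype.card (TorusPt d L) : ℝ) ^ 2 := by
    calc |∑ x : TorusPt d L, ∑ y : TorusPt d L, eW i m x y
          * ⟪(φ x : EuclideanSpace ℝ (Fin N)), (φ y : EuclideanSpace ℝ (Fin N))⟫|
        ≤ ∑ x : TorusPt d L, |∑ y : TorusPt d L, eW i m x y
          * ⟪(φ x : EuclideanSpace ℝ (Fin N)), (φ y : EuclideanSpace ℝ (Fin N))⟫| :=
          Finset.abs_sum_le_sum_abs _ _
      _ ≤ ∑ _x : TorusPt d L, (Fintype.card (TorusPt d L) : ℝ) := by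
          refine Finset.sum_le_sum fun x _ => ?_
          calc |∑ y : TorusPt d L, eW i m x y
                * ⟪(φ x : EuclideanSpace ℝ (Fin N)), (φ y : EuclideanSpace ℝ (Fin N))⟫|
              ≤ ∑ y : TorusPt d L, |eW i m x y
                * ⟪(φ x : EuclideanSpace ℝ (Fin N)), (φ y : EuclideanSpace ℝ (Fin N))⟫| :=
                Finset.abs_sum_le_sum_abs _ _
            _ ≤ ∑ _y : TorusPt d L, (1 : ℝ) := by
                refine Finset.sum_le_sum fun y _ => ?_
                rw [abs_mul]
                calc |eW i m x y| * |⟪(φ x : EuclideanSpace ℝ (Fin N)),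
                      (φ y : EuclideanSpace ℝ (Fin N))⟫|
                    ≤ 1 * 1 := by
                      apply mul_le_mul (eW_abs_le i m x y) (inner_abs_le _ _)
                        (abs_nonneg _) zero_le_one
                  _ = 1 := by norm_num
            _ = (Fintype.card (TorusPt d L) : ℝ) := by
                simp [Finset.sum_const, Finset.card_univ]
      _ = (Fintype.card (TorusPt d L) : ℝ) ^ 2 := by
          simp [Finset.sum_const, Finset.card_univ, nsmul_eq_mul]; ring
  have h2 : |-(1 / 2 : ℝ)| = 1 / 2 := by norm_num
  rw [h2]
  nlinarith [h1]

lemma exp_Hp_le (i : Fin d) (m : ℕ) (β : ℝ) (hβ : 0 ≤ β) (φ : SpinCfg d L N) :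
    Real.exp (-β * Hp i m φ) ≤ Real.exp (β * HpB d L) := by
  apply Real.exp_le_exp.mpr
  have := abs_le.mp (Hp_abs_le i m φ)
  nlinarith

lemma meas_coe_apply (u : TorusPt d L) :
    Measurable fun φ : SpinCfg d L N => (φ u : EuclideanSpace ℝ (Fin N)) :=
  measurable_subtype_coe.comp (measurable_pi_apply u)

lemma meas_cf (u : TorusPt d L) : Measurable (cf (N := N) u) := by
  unfold cf
  exact ((EuclideanSpace.proj (0 : Fin N)).continuous.measurable).comp (meas_coe_apply u)

lemma meas_Hp (i : Fin d) (m : ℕ) : Measurable (Hp (L := L) (N := N) i m) := by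
  unfold Hp
  apply Measurable.const_mul
  apply Finset.measurable_sum
  intro x _
  apply Finset.measurable_sum
  intro y _
  exact (Measurable.inner (meas_coe_apply x) (meas_coe_apply y)).const_mul _

lemma meas_glue (i : Fin d) (m : ℕ) :
    Measurable fun p : (IdxR d L i m → SpinSphere N) × (IdxA d L i m → SpinSphere N) =>
      glue i m p.1 p.2 := by
  apply measurable_pi_lambda
  intro z
  unfold glue
  by_cases h1 : inPlusSite i m z
  · by_cases h2 : inFixedSite i m z
    · simp only [dif_pos h1, dif_pos h2]
      exact (measurable_pi_apply _).comp measurable_fst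
    · simp only [dif_pos h1, dif_neg h2]
      exact (measurable_pi_apply _).comp measurable_snd
  · simp only [dif_neg h1]
    exact measurable_const

noncomputable def PP (i : Fin d) (m : ℕ) (β : ℝ) (u : TorusPt d L)
    (r : IdxR d L i m → SpinSphere N) (a : IdxA d L i m → SpinSphere N) : ℝ :=
  cf u (glue i m r a) * Real.exp (-β * Hp i m (glue i m r a))

noncomputable def IA (i : Fin d) (m : ℕ) (β : ℝ) (u : TorusPt d L)
    (r : IdxR d L i m → SpinSphere N) : ℝ :=
  ∫ a, PP i m β u r a ∂(Measure.pi fun _ : IdxA d L i m => sphereUniform N)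

/-- Uniform bound for `PP`. -/
noncomputable def Mb (d L : ℕ) [NeZero L] (β : ℝ) : ℝ := Real.exp (β * HpB d L)

lemma PP_abs_le (i : Fin d) (m : ℕ) (β : ℝ) (hβ : 0 ≤ β) (u : TorusPt d L)
    (r : IdxR d L i m → SpinSphere N) (a : IdxA d L i m → SpinSphere N) :
    |PP i m β u r a| ≤ Mb d L β := by
  unfold PP Mb
  rw [abs_mul, abs_of_pos (Real.exp_pos _)]
  calc |cf u (glue i m r a)| * Real.exp (-β * Hp i m (glue i m r a))
      ≤ 1 * Real.exp (β * HpB d L) := by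
        apply mul_le_mul (cf_abs_le _ _) (exp_Hp_le i m β hβ _) (Real.exp_pos _).le zero_le_one
    _ = Real.exp (β * HpB d L) := one_mul _

lemma meas_PP (i : Fin d) (m : ℕ) (β : ℝ) (u : TorusPt d L) :
    Measurable fun p : (IdxR d L i m → SpinSphere N) × (IdxA d L i m → SpinSphere N) =>
      PP i m β u p.1 p.2 := by
  unfold PP
  exact ((meas_cf u).comp (meas_glue i m)).mul
    ((Real.measurable_exp.comp (((meas_Hp i m).comp (meas_glue i m)).const_mul _)))

lemma meas_IA (i : Fin d) (m : ℕ) (β : ℝ) (u : TorusPt d L) :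
    Measurable (IA (N := N) i m β u) := by
  unfold IA
  have h := StronglyMeasurable.integral_prod_right'
    (ν := (Measure.pi fun _ : IdxA d L i m => sphereUniform N))
    (meas_PP (N := N) i m β u).stronglyMeasurable
  exact h.measurable

lemma IA_abs_le (i : Fin d) (m : ℕ) (β : ℝ) (hβ : 0 ≤ β) (u : TorusPt d L)
    (r : IdxR d L i m → SpinSphere N) : |IA i m β u r| ≤ Mb d L β := by
  unfold IA
  have h := norm_integral_le_of_norm_le_const
    (μ := (Measure.pi fun _ : IdxA d L i m => sphereUniform N))
    (f := fun a => PP i m β u r a) (C := Mb d L β)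
    (Filter.Eventually.of_forall fun a => by
      rw [Real.norm_eq_abs]; exact PP_abs_le i m β hβ u r a)
  rw [Real.norm_eq_abs] at h
  simpa using h

lemma integrable_bdd {α : Type*} [MeasurableSpace α] (μ : Measure α) [IsFiniteMeasure μ]
    (f : α → ℝ) (hm : Measurable f) (C : ℝ) (hb : ∀ x, |f x| ≤ C) : Integrable f μ :=
  Integrable.mono' (integrable_const C) hm.aestronglyMeasurable
    (Filter.Eventually.of_forall fun x => by rw [Real.norm_eq_abs]; exact hb x)

end RPaux
namespace RPaux

open Finset

variable {d L N : ℕ} [NeZero L] [NeZero N]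

lemma glue_restrict (i : Fin d) (m : ℕ) (φ : SpinCfg d L N) {z : TorusPt d L}
    (hz : inPlusSite i m z) :
    glue i m (fun w : IdxR d L i m => φ w.val.val) (fun w : IdxA d L i m => φ w.val.val) z
      = φ z := by
  unfold glue
  rw [dif_pos hz]
  by_cases h2 : inFixedSite i m z
  · rw [dif_pos h2]
  · rw [dif_neg h2]

lemma glue_restrict_refl (hL : Even L) (i : Fin d) (m : ℕ) (φ : SpinCfg d L N) {z : TorusPt d L}
    (hz : inPlusSite i m z) :
    glue i m (fun w : IdxR d L i m => φ w.val.val)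
      (fun w : IdxA d L i m => φ (reflSite i m w.val.val)) z = φ (reflSite i m z) := by
  unfold glue
  rw [dif_pos hz]
  by_cases h2 : inFixedSite i m z
  · rw [dif_pos h2, refl_fixed hL i m z h2]
  · rw [dif_neg h2]

lemma key_integral (hL : Even L) (i : Fin d) (m : ℕ) (β : ℝ) (hβ : 0 ≤ β)
    (u v : TorusPt d L)
    (hu1 : inPlusSite i m u) (hu2 : ¬ inFixedSite i m u)
    (hv1 : inPlusSite i m v) (hv2 : ¬ inFixedSite i m v) :
    ∫ φ, cf u φ * cf (reflSite i m v) φ * Real.exp (-β * hamiltonian φ) ∂(spinMeasure d L N)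
      = ∫ r, IA i m β u r * IA i m β v r
          ∂(Measure.pi fun _ : IdxR d L i m => sphereUniform N) := by
  set μ1 := sphereUniform N with hμ1
  set μP := (Measure.pi fun _ : IdxP d L i m => sphereUniform N) with hμP
  set μB := (Measure.pi fun _ : IdxB d L i m => sphereUniform N) with hμB
  set μA := (Measure.pi fun _ : IdxA d L i m => sphereUniform N) with hμA
  set μR := (Measure.pi fun _ : IdxR d L i m => sphereUniform N) with hμR
  -- the function on the split space
  set G1 : ((IdxP d L i m → SpinSphere N) × (IdxB d L i m → SpinSphere N)) → ℝ :=
    fun p => PP i m β u (fun w : IdxR d L i m => p.1 w.val) (fun w : IdxA d L i m => p.1 w.val)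
      * PP i m β v (fun w : IdxR d L i m => p.1 w.val)
          (fun z : IdxA d L i m => p.2 (eAB i m hL z)) with hG1
  -- pointwise identity
  have hpoint : ∀ φ : SpinCfg d L N,
      cf u φ * cf (reflSite i m v) φ * Real.exp (-β * hamiltonian φ)
        = G1 (fun z : IdxP d L i m => φ z.val, fun z : IdxB d L i m => φ z.val) := by
    intro φ
    have hg1 : ∀ z (hz : inPlusSite i m z),
        glue i m (fun w : IdxR d L i m => φ w.val.val) (fun w : IdxA d L i m => φ w.val.val) z
          = φ z := fun z hz => glue_restrict i m φ hz
    have hg2 : ∀ z (hz : inPlusSite i m z),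
        glue i m (fun w : IdxR d L i m => φ w.val.val)
          (fun w : IdxA d L i m => φ (reflSite i m w.val.val)) z
          = φ (reflSite i m z) := fun z hz => glue_restrict_refl hL i m φ hz
    rw [hG1]
    simp only []
    have e1 : (fun z : IdxA d L i m =>
        (fun z : IdxB d L i m => φ z.val) (eAB i m hL z))
        = fun w : IdxA d L i m => φ (reflSite i m w.val.val) := rfl
    rw [e1]
    unfold PP
    have hHp1 : Hp i m (glue i m (fun w : IdxR d L i m => φ w.val.val)
        (fun w : IdxA d L i m => φ w.val.val)) = Hp i m φ :=
      Hp_congr i m _ _ hg1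
    have hHp2 : Hp i m (glue i m (fun w : IdxR d L i m => φ w.val.val)
        (fun w : IdxA d L i m => φ (reflSite i m w.val.val))) = Hp i m (reflSiteCfg i m φ) := by
      refine Hp_congr i m _ _ fun z hz => ?_
      rw [hg2 z hz]; rfl
    have hcf1 : cf u (glue i m (fun w : IdxR d L i m => φ w.val.val)
        (fun w : IdxA d L i m => φ w.val.val)) = cf u φ := by
      unfold cf; rw [hg1 u hu1]
    have hcf2 : cf v (glue i m (fun w : IdxR d L i m => φ w.val.val)
        (fun w : IdxA d L i m => φ (reflSite i m w.val.val))) = cf (reflSite i m v) φ := by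
      unfold cf; rw [hg2 v hv1]
    rw [hHp1, hHp2, hcf1, hcf2, ham_split hL i m φ]
    rw [neg_mul, mul_add, neg_add, Real.exp_add]
    ring
  -- step 1 : split off the B part
  have hT1 : MeasurePreserving
      (MeasurableEquiv.piEquivPiSubtypeProd (fun _ : TorusPt d L => SpinSphere N)
        (inPlusSite i m)) (spinMeasure d L N) (μP.prod μB) :=
    measurePreserving_piEquivPiSubtypeProd (fun _ : TorusPt d L => sphereUniform N)
      (inPlusSite i m)
  have step1 : ∫ φ, cf u φ * cf (reflSite i m v) φ * Real.exp (-β * hamiltonian φ)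
      ∂(spinMeasure d L N) = ∫ p, G1 p ∂(μP.prod μB) := by
    rw [← hT1.integral_comp' G1]
    exact integral_congr_ae (Filter.Eventually.of_forall fun φ => hpoint φ)
  rw [step1]
  -- measurability of the restriction maps
  have mresR : Measurable fun ψ : IdxP d L i m → SpinSphere N =>
      (fun w : IdxR d L i m => ψ w.val) :=
    measurable_pi_lambda _ fun w => measurable_pi_apply w.val
  have mresA : Measurable fun ψ : IdxP d L i m → SpinSphere N =>
      (fun w : IdxA d L i m => ψ w.val) :=
    measurable_pi_lambda _ fun w => measurable_pi_apply w.val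
  have mresB : Measurable fun b : IdxB d L i m → SpinSphere N =>
      (fun z : IdxA d L i m => b (eAB i m hL z)) :=
    measurable_pi_lambda _ fun w => measurable_pi_apply _
  have mG1 : Measurable G1 := by
    rw [hG1]
    refine Measurable.mul ?_ ?_
    · exact (meas_PP i m β u).comp ((mresR.comp measurable_fst).prodMk
        (mresA.comp measurable_fst))
    · exact (meas_PP i m β v).comp ((mresR.comp measurable_fst).prodMk
        (mresB.comp measurable_snd))
  have iG1 : Integrable G1 (μP.prod μB) := by
    refine integrable_bdd _ G1 mG1 (Mb d L β * Mb d L β) fun p => ?_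
    rw [hG1]
    simp only []
    rw [abs_mul]
    exact mul_le_mul (PP_abs_le i m β hβ u _ _) (PP_abs_le i m β hβ v _ _)
      (abs_nonneg _) (Real.exp_pos _).le
  rw [MeasureTheory.integral_prod G1 iG1]
  -- inner integral over b
  have hEcongr : MeasurePreserving
      (MeasurableEquiv.piCongrLeft (fun _ : IdxB d L i m => SpinSphere N) (eAB i m hL))
      μA μB :=
    measurePreserving_piCongrLeft (fun _ : IdxB d L i m => sphereUniform N) (eAB i m hL)
  have inner1 : ∀ ψ : IdxP d L i m → SpinSphere N,
      ∫ b, G1 (ψ, b) ∂μB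
        = PP i m β u (fun w : IdxR d L i m => ψ w.val) (fun w : IdxA d L i m => ψ w.val)
            * IA i m β v (fun w : IdxR d L i m => ψ w.val) := by
    intro ψ
    rw [hG1]
    simp only []
    rw [MeasureTheory.integral_const_mul]
    congr 1
    unfold IA
    rw [← hEcongr.integral_comp']
    refine integral_congr_ae (Filter.Eventually.of_forall fun a => ?_)
    show PP i m β v (fun w : IdxR d L i m => ψ w.val)
        (fun z : IdxA d L i m =>
          (MeasurableEquiv.piCongrLeft (fun _ : IdxB d L i m => SpinSphere N) (eAB i m hL)) a
            ((eAB i m hL) z)) = _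
    have hz : (fun z : IdxA d L i m =>
        (MeasurableEquiv.piCongrLeft (fun _ : IdxB d L i m => SpinSphere N) (eAB i m hL)) a
          ((eAB i m hL) z)) = a := by
      funext z
      rw [MeasurableEquiv.coe_piCongrLeft, Equiv.piCongrLeft_apply_apply]
    rw [hz]
  rw [integral_congr_ae (Filter.Eventually.of_forall inner1)]
  -- step 2 : split the plus part into R and A
  have hT2 : MeasurePreserving
      (MeasurableEquiv.piEquivPiSubtypeProd (fun _ : IdxP d L i m => SpinSphere N)
        (fun z : IdxP d L i m => inFixedSite i m z.val)) μP (μR.prod μA) :=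
    measurePreserving_piEquivPiSubtypeProd (fun _ : IdxP d L i m => sphereUniform N)
      (fun z : IdxP d L i m => inFixedSite i m z.val)
  set G2 : ((IdxR d L i m → SpinSphere N) × (IdxA d L i m → SpinSphere N)) → ℝ :=
    fun w => PP i m β u w.1 w.2 * IA i m β v w.1 with hG2
  have step2 : ∫ ψ, PP i m β u (fun w : IdxR d L i m => ψ w.val)
      (fun w : IdxA d L i m => ψ w.val) * IA i m β v (fun w : IdxR d L i m => ψ w.val) ∂μP
      = ∫ w, G2 w ∂(μR.prod μA) := by
    rw [← hT2.integral_comp' G2]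
    rfl
  rw [step2]
  have mG2 : Measurable G2 := by
    rw [hG2]
    exact (meas_PP i m β u).mul ((meas_IA i m β v).comp measurable_fst)
  have iG2 : Integrable G2 (μR.prod μA) := by
    refine integrable_bdd _ G2 mG2 (Mb d L β * Mb d L β) fun w => ?_
    rw [hG2]
    simp only []
    rw [abs_mul]
    exact mul_le_mul (PP_abs_le i m β hβ u _ _) (IA_abs_le i m β hβ v _)
      (abs_nonneg _) (Real.exp_pos _).le
  rw [MeasureTheory.integral_prod G2 iG2]
  refine integral_congr_ae (Filter.Eventually.of_forall fun r => ?_)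
  rw [hG2]
  simp only []
  rw [MeasureTheory.integral_mul_const]
  rfl

end RPaux
open RPaux in
/-- **Two-site reflection-positivity inequality (reflection through sites).**
For `x ∈ T_L^+ ∖ T_L^R` and `y ∈ T_L^- ∖ T_L^R`,
`⟨φ_x^1 φ_y^1⟩ ≤ (⟨φ_x^1 φ_{Θx}^1⟩ + ⟨φ_{Θy}^1 φ_y^1⟩)/2`. -/
theorem spin_site_reflection_two_point_inequality
    (d L N : ℕ) [NeZero L] [NeZero N] (hd : 2 ≤ d) (hL : Even L)
    (β : ℝ) (hβ : 0 ≤ β) (i : Fin d) (m : ℕ) (hm : m < L)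
    (x y : TorusPt d L)
    (hx : inPlusSite i m x) (hx' : ¬ inFixedSite i m x)
    (hy : inMinusSite i m y) (hy' : ¬ inFixedSite i m y) :
    corrOne d L N β x y ≤
      (1 / 2) * (corrOne d L N β x (reflSite i m x) +
        corrOne d L N β (reflSite i m y) y) := by

  have hyB : ¬ inPlusSite i m y := mem_B_of_minus hL i m y hy hy'
  have hAy := mem_A_of_B hL i m y hyB
  have e1 := key_integral (N := N) hL i m β hβ x (reflSite i m y) hx hx' hAy.1 hAy.2
  have e2 := key_integral (N := N) hL i m β hβ x x hx hx' hx hx'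
  have e3 := key_integral (N := N) hL i m β hβ (reflSite i m y) (reflSite i m y) hAy.1 hAy.2 hAy.1 hAy.2
  rw [reflSite_invol i m y] at e1 e3
  simp only [cf] at e1 e2 e3
  have hIAx := meas_IA (L := L) (N := N) i m β x
  have hIAy := meas_IA (L := L) (N := N) i m β (reflSite i m y)
  have hb : ∀ (u : TorusPt d L) (r : IdxR d L i m → SpinSphere N),
      |IA i m β u r| ≤ Mb d L β := fun u r => IA_abs_le i m β hβ u r
  have hInt11 : Integrable (fun r => IA i m β x r * IA i m β x r)
      (Measure.pi fun _ : IdxR d L i m => sphereUniform N) :=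
    integrable_bdd _ _ (hIAx.mul hIAx) (Mb d L β * Mb d L β)
      (fun r => by
        rw [abs_mul]
        exact mul_le_mul (hb _ _) (hb _ _) (abs_nonneg _) (Real.exp_pos _).le)
  have hInt22 : Integrable (fun r => IA i m β (reflSite i m y) r * IA i m β (reflSite i m y) r)
      (Measure.pi fun _ : IdxR d L i m => sphereUniform N) :=
    integrable_bdd _ _ (hIAy.mul hIAy) (Mb d L β * Mb d L β)
      (fun r => by
        rw [abs_mul]
        exact mul_le_mul (hb _ _) (hb _ _) (abs_nonneg _) (Real.exp_pos _).le)
  have hInt12 : Integrable (fun r => IA i m β x r * IA i m β (reflSite i m y) r)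
      (Measure.pi fun _ : IdxR d L i m => sphereUniform N) :=
    integrable_bdd _ _ (hIAx.mul hIAy) (Mb d L β * Mb d L β)
      (fun r => by
        rw [abs_mul]
        exact mul_le_mul (hb _ _) (hb _ _) (abs_nonneg _) (Real.exp_pos _).le)
  have hmain : (∫ r, IA i m β x r * IA i m β (reflSite i m y) r
        ∂(Measure.pi fun _ : IdxR d L i m => sphereUniform N))
      ≤ 1 / 2 * ((∫ r, IA i m β x r * IA i m β x r
          ∂(Measure.pi fun _ : IdxR d L i m => sphereUniform N))
        + (∫ r, IA i m β (reflSite i m y) r * IA i m β (reflSite i m y) r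
          ∂(Measure.pi fun _ : IdxR d L i m => sphereUniform N))) := by
    have step : (∫ r, IA i m β x r * IA i m β (reflSite i m y) r
          ∂(Measure.pi fun _ : IdxR d L i m => sphereUniform N))
        ≤ ∫ r, 1 / 2 * (IA i m β x r * IA i m β x r
            + IA i m β (reflSite i m y) r * IA i m β (reflSite i m y) r)
          ∂(Measure.pi fun _ : IdxR d L i m => sphereUniform N) := by
      refine integral_mono hInt12 ((hInt11.add hInt22).const_mul _) ?_
      intro r
      simp only []
      nlinarith [sq_nonneg (IA i m β x r - IA i m β (reflSite i m y) r)]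
    rw [MeasureTheory.integral_const_mul, integral_add hInt11 hInt22] at step
    exact step
  simp only [corrOne, gibbsExp]
  rw [e1, e2, e3]
  have hZ0 : (0 : ℝ) ≤ (∫ φ, Real.exp (-β * hamiltonian φ) ∂(spinMeasure d L N))⁻¹ :=
    inv_nonneg.2 (integral_nonneg fun φ => (Real.exp_pos _).le)
  set Z := (∫ φ, Real.exp (-β * hamiltonian φ) ∂(spinMeasure d L N))⁻¹ with hZdef
  set A := (∫ r, IA i m β x r * IA i m β x r
    ∂(Measure.pi fun _ : IdxR d L i m => sphereUniform N)) with hA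
  set B := (∫ r, IA i m β (reflSite i m y) r * IA i m β (reflSite i m y) r
    ∂(Measure.pi fun _ : IdxR d L i m => sphereUniform N)) with hB
  have hre : 1 / 2 * (Z * A + Z * B) = Z * (1 / 2 * (A + B)) := by ring
  rw [hre]
  exact mul_le_mul_of_nonneg_left hmain hZ0
end

section
/- For every z ∈ T_L with z ≠ o, the number of dimer covers of the torus with the two vertices o and z removed is at most the number of dimer covers with the two neighbouring vertices o and e_1 removed: |Ω^{dim}({o,z})| ≤ |Ω^{dim}({o,e_1})|. -/
noncomputable def dimerCount (d L : ℕ) (A : Finset (TorusPt d L)) : ℕ :=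
  Nat.card {f : TorusPt d L → TorusPt d L //
    (∀ x ∈ A, f x = x) ∧
      ∀ x, x ∉ A → f x ∉ A ∧ f x ≠ x ∧ torusAdj x (f x) ∧ f (f x) = x}

namespace DimerAux

variable {d L : ℕ}

/-- The matching condition, identical to the predicate in `dimerCount`. -/
def MCond (A : Finset (TorusPt d L)) (f : TorusPt d L → TorusPt d L) : Prop :=
  (∀ x ∈ A, f x = x) ∧
    ∀ x, x ∉ A → f x ∉ A ∧ f x ≠ x ∧ torusAdj x (f x) ∧ f (f x) = x

lemma dimerCount_eq (A : Finset (TorusPt d L)) :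
    dimerCount d L A = Nat.card {f // MCond A f} := rfl

lemma torusAdj_iff {x y : TorusPt d L} :
    torusAdj x y ↔ ∃ j : Fin d, (y j = x j + 1 ∨ y j = x j - 1) ∧ ∀ k, k ≠ j → y k = x k := by
  constructor
  · rintro ⟨j, h | h⟩
    · exact ⟨j, Or.inl (by rw [h, Function.update_self]),
        fun k hk => by rw [h, Function.update_of_ne hk]⟩
    · exact ⟨j, Or.inr (by rw [h, Function.update_self]),
        fun k hk => by rw [h, Function.update_of_ne hk]⟩
  · rintro ⟨j, h1 | h1, h2⟩
    · refine ⟨j, Or.inl ?_⟩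
      funext k
      by_cases hk : k = j
      · subst hk; rw [Function.update_self, h1]
      · rw [Function.update_of_ne hk, h2 k hk]
    · refine ⟨j, Or.inr ?_⟩
      funext k
      by_cases hk : k = j
      · subst hk; rw [Function.update_self, h1]
      · rw [Function.update_of_ne hk, h2 k hk]

lemma torusAdj_symm {x y : TorusPt d L} (h : torusAdj x y) : torusAdj y x := by
  rw [torusAdj_iff] at h ⊢
  obtain ⟨j, h1 | h1, h2⟩ := h
  · exact ⟨j, Or.inr (by rw [h1]; ring), fun k hk => (h2 k hk).symm⟩
  · exact ⟨j, Or.inl (by rw [h1]; ring), fun k hk => (h2 k hk).symm⟩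

section Conj

/-- Conjugating a matching by a graph automorphism. -/
lemma mcond_conj (e : TorusPt d L ≃ TorusPt d L)
    (he : ∀ x y, torusAdj x y → torusAdj (e x) (e y))
    (A : Finset (TorusPt d L)) (f : TorusPt d L → TorusPt d L)
    (hf : MCond A f) : MCond (A.image e) (e ∘ f ∘ e.symm) := by
  classical
  obtain ⟨h1, h2⟩ := hf
  constructor
  · rintro x hx
    obtain ⟨a, ha, rfl⟩ := Finset.mem_image.1 hx
    simp only [Function.comp_apply, Equiv.symm_apply_apply]
    rw [h1 a ha]
  · intro x hx
    have hx' : e.symm x ∉ A := by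
      intro h
      exact hx (Finset.mem_image.2 ⟨_, h, e.apply_symm_apply x⟩)
    obtain ⟨g1, g2, g3, g4⟩ := h2 (e.symm x) hx'
    refine ⟨?_, ?_, ?_, ?_⟩
    · simp only [Function.comp_apply]
      intro h
      obtain ⟨a, ha, hae⟩ := Finset.mem_image.1 h
      exact g1 (e.injective hae ▸ ha)
    · simp only [Function.comp_apply]
      intro h
      exact g2 (e.injective (h.trans (e.apply_symm_apply x).symm))
    · have := he _ _ g3
      simpa [Equiv.apply_symm_apply] using this
    · simp only [Function.comp_apply, Equiv.symm_apply_apply]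
      rw [g4, e.apply_symm_apply]

lemma mcond_conj_iff (e : TorusPt d L ≃ TorusPt d L)
    (he : ∀ x y, torusAdj x y → torusAdj (e x) (e y))
    (he' : ∀ x y, torusAdj x y → torusAdj (e.symm x) (e.symm y))
    (A : Finset (TorusPt d L)) (f : TorusPt d L → TorusPt d L) :
    MCond A f ↔ MCond (A.image e) (e ∘ f ∘ e.symm) := by
  classical
  constructor
  · exact mcond_conj e he A f
  · intro h
    have := mcond_conj e.symm he' _ _ h
    have himg : (A.image e).image e.symm = A := by
      rw [Finset.image_image]
      simpa using Finset.image_id A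
    have hfun : (⇑e.symm ∘ (⇑e ∘ f ∘ ⇑e.symm) ∘ ⇑e.symm.symm) = f := by
      funext x; simp
    rwa [himg, hfun] at this

lemma dimerCount_image (e : TorusPt d L ≃ TorusPt d L)
    (he : ∀ x y, torusAdj x y → torusAdj (e x) (e y))
    (he' : ∀ x y, torusAdj x y → torusAdj (e.symm x) (e.symm y))
    (A : Finset (TorusPt d L)) :
    dimerCount d L A = dimerCount d L (A.image e) := by
  rw [dimerCount_eq, dimerCount_eq]
  exact Nat.card_congr ((Equiv.arrowCongr e e).subtypeEquiv fun f => by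
    simpa [Equiv.arrowCongr] using mcond_conj_iff e he he' A f)

end Conj

section Autos

-- translation
lemma adj_add (v : TorusPt d L) (x y : TorusPt d L) (h : torusAdj x y) :
    torusAdj (x + v) (y + v) := by
  rw [torusAdj_iff] at h ⊢
  obtain ⟨j, h1 | h1, h2⟩ := h
  · exact ⟨j, Or.inl (by simp [h1]; ring), fun k hk => by simp [h2 k hk]⟩
  · exact ⟨j, Or.inr (by simp [h1]; ring), fun k hk => by simp [h2 k hk]⟩

-- negation
lemma adj_neg (x y : TorusPt d L) (h : torusAdj x y) : torusAdj (-x) (-y) := by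
  rw [torusAdj_iff] at h ⊢
  obtain ⟨j, h1 | h1, h2⟩ := h
  · exact ⟨j, Or.inr (by simp [h1]; ring), fun k hk => by simp [h2 k hk]⟩
  · exact ⟨j, Or.inl (by simp [h1]; ring), fun k hk => by simp [h2 k hk]⟩

-- coordinate permutation: x ↦ x ∘ π
lemma adj_perm (π : Equiv.Perm (Fin d)) (x y : TorusPt d L) (h : torusAdj x y) :
    torusAdj (x ∘ π) (y ∘ π) := by
  rw [torusAdj_iff] at h ⊢
  obtain ⟨j, h1, h2⟩ := h
  refine ⟨π.symm j, ?_, fun k hk => ?_⟩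
  · simpa using h1
  · have : π k ≠ j := fun hc => hk (by simp [← hc])
    exact h2 _ this

/-- reflection in coordinate `j`:  `x_j ↦ c - x_j`. -/
def rfl' (j : Fin d) (c : ZMod L) (x : TorusPt d L) : TorusPt d L :=
  fun k => if k = j then c - x k else x k

lemma rfl'_invol (j : Fin d) (c : ZMod L) : Function.Involutive (rfl' (L := L) j c) := by
  intro x; funext k; simp only [rfl']; split <;> simp

lemma adj_rfl' (j : Fin d) (c : ZMod L) (x y : TorusPt d L) (h : torusAdj x y) :
    torusAdj (rfl' j c x) (rfl' j c y) := by
  rw [torusAdj_iff] at h ⊢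
  obtain ⟨m, h1 | h1, h2⟩ := h
  · by_cases hm : m = j
    · subst hm
      refine ⟨m, Or.inr ?_, fun k hk => ?_⟩
      · simp only [rfl', if_true]; rw [h1]; ring
      · simp only [rfl', if_neg hk, h2 k hk]
    · refine ⟨m, Or.inl ?_, fun k hk => ?_⟩
      · simp only [rfl', if_neg hm, h1]
      · by_cases hkj : k = j
        · subst hkj
          simp only [rfl', if_pos rfl, h2 k (Ne.symm hm)]
        · simp only [rfl', if_neg hkj, h2 k hk]
  · by_cases hm : m = j
    · subst hm
      refine ⟨m, Or.inl ?_, fun k hk => ?_⟩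
      · simp only [rfl', if_true]; rw [h1]; ring
      · simp only [rfl', if_neg hk, h2 k hk]
    · refine ⟨m, Or.inr ?_, fun k hk => ?_⟩
      · simp only [rfl', if_neg hm, h1]
      · by_cases hkj : k = j
        · subst hkj
          simp only [rfl', if_pos rfl, h2 k (Ne.symm hm)]
        · simp only [rfl', if_neg hkj, h2 k hk]

end Autos

section ZModFacts

variable {L : ℕ} [NeZero L]

lemma natCast_val_self (w : ZMod L) : ((w.val : ℕ) : ZMod L) = w :=
  ZMod.natCast_rightInverse w

omit [NeZero L] in
lemma mod_cases {p q : ℕ} (hL : 0 < L) (hp : p < 2*L) (hq : q < L) (h : p % L = q % L) :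
    p = q ∨ p = q + L := by
  rcases Nat.lt_or_ge p L with h1 | h1
  · left; rwa [Nat.mod_eq_of_lt h1, Nat.mod_eq_of_lt hq] at h
  · right
    have h2 : p - L < L := by omega
    rw [Nat.mod_eq_of_lt hq, Nat.mod_eq_sub_mod h1, Nat.mod_eq_of_lt h2] at h
    omega

lemma cast_eq_cases {p q : ℕ} (hp : p < 2*L) (hq : q < L) (h : (p : ZMod L) = q) :
    p = q ∨ p = q + L :=
  mod_cases (Nat.pos_of_ne_zero (NeZero.ne L)) hp hq ((ZMod.natCast_eq_natCast_iff' p q L).1 h)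

omit [NeZero L] in
lemma cast_eq_of {p q : ℕ} (h : p = q ∨ p = q + L) : (p : ZMod L) = q := by
  rcases h with h | h <;> subst h
  · rfl
  · push_cast [ZMod.natCast_self]; ring

section Refl
variable {n : ℕ} (hn : L = 2 * n) (hn1 : 1 ≤ n)
include hn hn1

lemma a1 (w : ZMod L) : (1 ≤ (1 - w).val ∧ (1 - w).val ≤ n) ↔ ¬ (1 ≤ w.val ∧ w.val ≤ n) := by
  have haL : w.val < L := ZMod.val_lt w
  have hbL : (1 - w).val < L := ZMod.val_lt _
  have hsum : (((1 - w).val + w.val : ℕ) : ZMod L) = ((1 : ℕ) : ZMod L) := by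
    push_cast [natCast_val_self]; ring
  have hcases := cast_eq_cases (by omega) (by omega) hsum
  omega

lemma a2 (w v : ZMod L) (hw : 1 ≤ w.val ∧ w.val ≤ n) (hv : ¬ (1 ≤ v.val ∧ v.val ≤ n))
    (hc : v = w + 1 ∨ v = w - 1) : v = 1 - w := by
  have haL : w.val < L := ZMod.val_lt w
  have hbL : v.val < L := ZMod.val_lt _
  have goal : (((v.val + w.val : ℕ)) : ZMod L) = ((1:ℕ) : ZMod L) → v = 1 - w := by
    intro h
    push_cast [natCast_val_self] at h
    linear_combination h
  apply goal
  apply cast_eq_of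
  rcases hc with h | h
  · have : ((w.val + 1 : ℕ) : ZMod L) = ((v.val : ℕ) : ZMod L) := by
      push_cast [natCast_val_self]
      exact h.symm
    have hc2 := cast_eq_cases (L := L) (by omega) (by omega) this
    omega
  · have : ((v.val + 1 : ℕ) : ZMod L) = ((w.val : ℕ) : ZMod L) := by
      push_cast [natCast_val_self]
      rw [h]; ring
    have hc2 := cast_eq_cases (L := L) (by omega) (by omega) this
    omega

lemma afp (w : ZMod L) : 1 - w ≠ w := by
  intro h
  have hsum : ((w.val + w.val : ℕ) : ZMod L) = ((1 : ℕ) : ZMod L) := by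
    push_cast [natCast_val_self]
    linear_combination -h
  have haL : w.val < L := ZMod.val_lt w
  have := cast_eq_cases (by omega) (by omega) hsum
  omega

lemma b1 (w : ZMod L) : ((-1 - w).val < n) ↔ ¬ (w.val < n) := by
  have haL : w.val < L := ZMod.val_lt w
  have hbL : (-1 - w).val < L := ZMod.val_lt _
  have hsum : (((-1 - w).val + w.val + 1 : ℕ) : ZMod L) = ((0 : ℕ) : ZMod L) := by
    push_cast [natCast_val_self]; ring
  have hcases := cast_eq_cases (by omega) (by omega) hsum
  omega

lemma b2 (w v : ZMod L) (hw : w.val < n) (hv : ¬ (v.val < n))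
    (hc : v = w + 1 ∨ v = w - 1) : v = -1 - w := by
  have haL : w.val < L := ZMod.val_lt w
  have hbL : v.val < L := ZMod.val_lt _
  have goal : (((v.val + w.val + 1 : ℕ)) : ZMod L) = ((0:ℕ) : ZMod L) → v = -1 - w := by
    intro h
    push_cast [natCast_val_self] at h
    linear_combination h
  apply goal
  apply cast_eq_of
  rcases hc with h | h
  · have : ((w.val + 1 : ℕ) : ZMod L) = ((v.val : ℕ) : ZMod L) := by
      push_cast [natCast_val_self]
      exact h.symm
    have hc2 := cast_eq_cases (L := L) (by omega) (by omega) this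
    omega
  · have : ((v.val + 1 : ℕ) : ZMod L) = ((w.val : ℕ) : ZMod L) := by
      push_cast [natCast_val_self]
      rw [h]; ring
    have hc2 := cast_eq_cases (L := L) (by omega) (by omega) this
    omega

lemma bfp (w : ZMod L) : -1 - w ≠ w := by
  intro h
  have hsum : ((w.val + w.val + 1 : ℕ) : ZMod L) = ((0 : ℕ) : ZMod L) := by
    push_cast [natCast_val_self]
    linear_combination -h
  have haL : w.val < L := ZMod.val_lt w
  have := cast_eq_cases (by omega) (by omega) hsum
  omega

end Refl
end ZModFacts

section RP

variable {d L : ℕ}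
variable (θ : TorusPt d L → TorusPt d L)
variable (P : TorusPt d L → Prop)

/-- crossing data of a matching w.r.t. the reflection `θ`. -/
noncomputable def crB (f : TorusPt d L → TorusPt d L) : TorusPt d L → Bool :=
  fun x => decide (f x = θ x)

/-- number of matchings with prescribed crossing data. -/
noncomputable def nS (A : Finset (TorusPt d L)) (S : TorusPt d L → Bool) : ℕ :=
  Nat.card {f : TorusPt d L → TorusPt d L // MCond A f ∧ crB θ f = S}

lemma crB_eq_iff {f g : TorusPt d L → TorusPt d L} {S : TorusPt d L → Bool}
    (hf : crB θ f = S) (hg : crB θ g = S) : ∀ x, f x = θ x ↔ g x = θ x := by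
  intro x
  have h1 := congrFun hf x
  have h2 := congrFun hg x
  exact decide_eq_decide.mp (h1.trans h2.symm)

lemma crB_funext {f h : TorusPt d L → TorusPt d L}
    (hfx : ∀ x, (h x = θ x ↔ f x = θ x)) : crB θ h = crB θ f := by
  funext x
  exact decide_eq_decide.mpr (hfx x)

section CrossFacts
variable (hθfp : ∀ x, θ x ≠ x)
include hθfp

lemma cross_notmem {A : Finset (TorusPt d L)} {f : TorusPt d L → TorusPt d L}
    (hf : MCond A f) {x : TorusPt d L} (hx : f x = θ x) :
    x ∉ A ∧ θ x ∉ A ∧ f (θ x) = x := by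
  have hxA : x ∉ A := by
    intro h
    exact hθfp x ((hf.1 x h ▸ hx).symm)
  obtain ⟨h1, _, _, h4⟩ := hf.2 x hxA
  exact ⟨hxA, hx ▸ h1, hx ▸ h4⟩

lemma cross_of_partner {A : Finset (TorusPt d L)} {f : TorusPt d L → TorusPt d L}
    (hf : MCond A f) {x : TorusPt d L} (hx : f (θ x) = x) : f x = θ x := by
  have hθxA : θ x ∉ A := by
    intro h
    have := hf.1 _ h
    rw [this] at hx
    exact hθfp x hx
  obtain ⟨_, _, _, h4⟩ := hf.2 (θ x) hθxA
  rw [hx] at h4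
  exact h4

end CrossFacts

/-- the half-swap of two matchings with the same crossing data. -/
noncomputable def mixf [DecidablePred P] (f g : TorusPt d L → TorusPt d L) :
    TorusPt d L → TorusPt d L :=
  fun x => if P x then f x else g x

section Mix
variable [DecidablePred P]
variable (hθfp : ∀ x, θ x ≠ x)
variable (hPθ : ∀ x, P (θ x) ↔ ¬ P x)
variable (hcross : ∀ x y, torusAdj x y → P x → ¬ P y → y = θ x)
include hθfp hPθ hcross

lemma hcross' (hθθ : ∀ x, θ (θ x) = x) :
    ∀ x y, torusAdj x y → ¬ P x → P y → y = θ x := by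
  intro x y hadj hx hy
  have := hcross y x (torusAdj_symm hadj) hy hx
  rw [this, hθθ]

lemma mix_mcond (hθθ : ∀ x, θ (θ x) = x)
    {A B A' B' : Finset (TorusPt d L)}
    (hA : ∀ x ∈ A, P x) (hB : ∀ x ∈ B, ¬ P x)
    (hA' : ∀ x ∈ A', P x) (hB' : ∀ x ∈ B', ¬ P x)
    {f g : TorusPt d L → TorusPt d L}
    (hf : MCond (A ∪ B) f) (hg : MCond (A' ∪ B') g)
    (hS : ∀ x, f x = θ x ↔ g x = θ x) :
    MCond (A ∪ B') (mixf P f g) ∧ ∀ x, (mixf P f g x = θ x ↔ f x = θ x) := by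
  constructor
  · constructor
    · intro x hx
      rcases Finset.mem_union.1 hx with hxA | hxB'
      · rw [mixf, if_pos (hA x hxA)]
        exact hf.1 x (Finset.mem_union_left _ hxA)
      · rw [mixf, if_neg (hB' x hxB')]
        exact hg.1 x (Finset.mem_union_right _ hxB')
    · intro x hx
      have hxA : x ∉ A := fun h => hx (Finset.mem_union_left _ h)
      have hxB' : x ∉ B' := fun h => hx (Finset.mem_union_right _ h)
      by_cases hPx : P x
      · -- left side: use f
        have hxB : x ∉ B := fun h => hB x h hPx
        have hxAB : x ∉ A ∪ B := by
          simp [Finset.mem_union, hxA, hxB]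
        obtain ⟨h1, h2, h3, h4⟩ := hf.2 x hxAB
        have hmx : mixf P f g x = f x := if_pos hPx
        rw [hmx]
        have hfxA : f x ∉ A := fun h => h1 (Finset.mem_union_left _ h)
        have hfxB' : f x ∉ B' := by
          intro h
          have hnP : ¬ P (f x) := hB' _ h
          have hfθ : f x = θ x := hcross x (f x) h3 hPx hnP
          have hgθ : g x = θ x := (hS x).1 hfθ
          have hnm := (cross_notmem θ hθfp hg hgθ).2.1
          rw [hfθ] at h
          exact hnm (Finset.mem_union_right _ h)
        refine ⟨fun hmem => ?_, h2, h3, ?_⟩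
        · rcases Finset.mem_union.1 hmem with hh | hh
          · exact hfxA hh
          · exact hfxB' hh
        · by_cases hPf : P (f x)
          · rw [mixf, if_pos hPf]; exact h4
          · have hfθ : f x = θ x := hcross x (f x) h3 hPx hPf
            have hgθ : g x = θ x := (hS x).1 hfθ
            have hg3 := (cross_notmem θ hθfp hg hgθ).2.2
            have hnPθ : ¬ P (θ x) := fun hc => ((hPθ x).1 hc) hPx
            rw [hfθ, mixf, if_neg hnPθ]
            exact hg3
      · -- right side: use g
        have hxA'' : x ∉ A' := fun h => hPx (hA' x h)
        have hxA'B' : x ∉ A' ∪ B' := by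
          simp [Finset.mem_union, hxA'', hxB']
        obtain ⟨h1, h2, h3, h4⟩ := hg.2 x hxA'B'
        have hmx : mixf P f g x = g x := if_neg hPx
        rw [hmx]
        have hgxB' : g x ∉ B' := fun h => h1 (Finset.mem_union_right _ h)
        have hgxA : g x ∉ A := by
          intro h
          have hPg : P (g x) := hA _ h
          have hgθ : g x = θ x := hcross' θ P hθfp hPθ hcross hθθ x (g x) h3 hPx hPg
          have hfθ : f x = θ x := (hS x).2 hgθ
          have hnm := (cross_notmem θ hθfp hf hfθ).2.1
          rw [hgθ] at h
          exact hnm (Finset.mem_union_left _ h)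
        refine ⟨fun hmem => ?_, h2, h3, ?_⟩
        · rcases Finset.mem_union.1 hmem with hh | hh
          · exact hgxA hh
          · exact hgxB' hh
        · by_cases hPg : P (g x)
          · have hgθ : g x = θ x := hcross' θ P hθfp hPθ hcross hθθ x (g x) h3 hPx hPg
            have hfθ : f x = θ x := (hS x).2 hgθ
            have hf3 := (cross_notmem θ hθfp hf hfθ).2.2
            have hPθx : P (θ x) := (hPθ x).2 hPx
            rw [hgθ, mixf, if_pos hPθx]
            exact hf3
          · rw [mixf, if_neg hPg]; exact h4
  · intro x
    by_cases hPx : P x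
    · rw [mixf, if_pos hPx]
    · rw [mixf, if_neg hPx]
      exact (hS x).symm

lemma swap_card (hθθ : ∀ x, θ (θ x) = x)
    {A B A' B' : Finset (TorusPt d L)}
    (hA : ∀ x ∈ A, P x) (hB : ∀ x ∈ B, ¬ P x)
    (hA' : ∀ x ∈ A', P x) (hB' : ∀ x ∈ B', ¬ P x)
    (S : TorusPt d L → Bool) :
    nS θ (A ∪ B) S * nS θ (A' ∪ B') S = nS θ (A ∪ B') S * nS θ (A' ∪ B) S := by
  classical
  rw [nS, nS, nS, nS, ← Nat.card_prod, ← Nat.card_prod]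
  apply Nat.card_congr
  refine ⟨fun p => ?_, fun p => ?_, ?_, ?_⟩
  · obtain ⟨⟨f, hf, hfS⟩, ⟨g, hg, hgS⟩⟩ := p
    have hS := crB_eq_iff θ hfS hgS
    have h1 := mix_mcond θ P hθfp hPθ hcross hθθ hA hB hA' hB' hf hg hS
    have h2 := mix_mcond θ P hθfp hPθ hcross hθθ hA' hB' hA hB hg hf (fun x => (hS x).symm)
    exact (⟨mixf P f g, h1.1, (crB_funext θ h1.2).trans hfS⟩,
           ⟨mixf P g f, h2.1, (crB_funext θ h2.2).trans hgS⟩)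
  · obtain ⟨⟨f, hf, hfS⟩, ⟨g, hg, hgS⟩⟩ := p
    have hS := crB_eq_iff θ hfS hgS
    have h1 := mix_mcond θ P hθfp hPθ hcross hθθ hA hB' hA' hB hf hg hS
    have h2 := mix_mcond θ P hθfp hPθ hcross hθθ hA' hB hA hB' hg hf (fun x => (hS x).symm)
    exact (⟨mixf P f g, h1.1, (crB_funext θ h1.2).trans hfS⟩,
           ⟨mixf P g f, h2.1, (crB_funext θ h2.2).trans hgS⟩)
  · rintro ⟨⟨f, hf, hfS⟩, ⟨g, hg, hgS⟩⟩
    refine Prod.ext (Subtype.ext ?_) (Subtype.ext ?_) <;>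
      · funext x
        by_cases hPx : P x <;> simp [mixf, hPx]
  · rintro ⟨⟨f, hf, hfS⟩, ⟨g, hg, hgS⟩⟩
    refine Prod.ext (Subtype.ext ?_) (Subtype.ext ?_) <;>
      · funext x
        by_cases hPx : P x <;> simp [mixf, hPx]

end Mix

/-- conjugation by the reflection preserves crossing data. -/
lemma crB_conj (hθθ : ∀ x, θ (θ x) = x) (hθfp : ∀ x, θ x ≠ x)
    {A : Finset (TorusPt d L)} {f : TorusPt d L → TorusPt d L} (hf : MCond A f) :
    crB θ (θ ∘ f ∘ θ) = crB θ f := by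
  apply crB_funext
  intro x
  constructor
  · intro h
    have h2 : f (θ x) = x := by
      have := congrArg θ h
      simp only [Function.comp_apply] at this ⊢
      rwa [hθθ, hθθ] at this
    exact cross_of_partner θ hθfp hf h2
  · intro h
    have h2 := (cross_notmem θ hθfp hf h).2.2
    simp only [Function.comp_apply]
    rw [h2]

lemma nS_image (hθθ : ∀ x, θ (θ x) = x) (hθfp : ∀ x, θ x ≠ x)
    (hθadj : ∀ x y, torusAdj x y → torusAdj (θ x) (θ y))
    (A : Finset (TorusPt d L)) (S : TorusPt d L → Bool) :
    nS θ A S = nS θ (A.image θ) S := by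
  classical
  have hinv : Function.Involutive θ := hθθ
  set θE : Equiv.Perm (TorusPt d L) := hinv.toPerm θ with hθE
  have hcoe : ⇑θE = θ := rfl
  have hcoe' : ⇑θE.symm = θ := rfl
  rw [nS, nS]
  apply Nat.card_congr
  refine (Equiv.arrowCongr θE θE).subtypeEquiv fun f => ?_
  have harrow : (Equiv.arrowCongr θE θE) f = θ ∘ f ∘ θ := rfl
  rw [harrow]
  constructor
  · rintro ⟨hm, hc⟩
    refine ⟨?_, (crB_conj θ hθθ hθfp hm).trans hc⟩
    have := mcond_conj θE (by rw [hcoe]; exact hθadj) A f hm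
    rwa [hcoe, hcoe'] at this
  · rintro ⟨hm, hc⟩
    have hm' : MCond A f := by
      have hiff := mcond_conj_iff θE (by rw [hcoe]; exact hθadj)
        (by rw [hcoe']; exact hθadj) A f
      rw [hcoe, hcoe'] at hiff
      exact hiff.2 hm
    exact ⟨hm', (crB_conj θ hθθ hθfp hm').symm.trans hc⟩

lemma nat_card_sigma' {ι : Type*} [Fintype ι] {β : ι → Type*} [∀ i, Finite (β i)] :
    Nat.card (Σ i, β i) = ∑ i, Nat.card (β i) := by
  classical
  letI : ∀ i, Fintype (β i) := fun i => Fintype.ofFinite _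
  rw [Nat.card_eq_fintype_card, Fintype.card_sigma]
  exact Finset.sum_congr rfl fun i _ => (Nat.card_eq_fintype_card).symm

lemma dimer_sum [NeZero L] (A : Finset (TorusPt d L)) :
    dimerCount d L A = ∑ S : TorusPt d L → Bool, nS θ A S := by
  classical
  rw [dimerCount_eq]
  rw [Nat.card_congr (Equiv.sigmaFiberEquiv
    (fun f : {f // MCond A f} => crB θ f.1)).symm]
  rw [nat_card_sigma']
  refine Finset.sum_congr rfl fun S _ => ?_
  exact Nat.card_congr (Equiv.subtypeSubtypeEquivSubtypeInter
    (fun f => MCond A f) (fun f => crB θ f = S))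

lemma nat_cs {ι : Type*} [Fintype ι] (x u v : ι → ℕ) (h : ∀ i, x i * x i = u i * v i) :
    (∑ i, x i) * (∑ i, x i) ≤ (∑ i, u i) * (∑ i, v i) := by
  have key : ∀ i, (x i : ℝ) = Real.sqrt (u i) * Real.sqrt (v i) := by
    intro i
    have hx' : ((x i : ℝ)) * x i = (u i : ℝ) * v i := by exact_mod_cast h i
    have h2 : Real.sqrt ((x i : ℝ) * x i) = x i :=
      Real.sqrt_mul_self (by positivity)
    rw [← h2, hx', Real.sqrt_mul (by positivity)]
  have H := Finset.sum_mul_sq_le_sq_mul_sq Finset.univ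
    (fun i => Real.sqrt (u i)) (fun i => Real.sqrt (v i))
  have e1 : ∑ i, Real.sqrt (u i) * Real.sqrt (v i) = ∑ i, (x i : ℝ) :=
    Finset.sum_congr rfl fun i _ => (key i).symm
  have e2 : ∑ i, (Real.sqrt (u i)) ^ 2 = ∑ i, (u i : ℝ) :=
    Finset.sum_congr rfl fun i _ => Real.sq_sqrt (by positivity)
  have e3 : ∑ i, (Real.sqrt (v i)) ^ 2 = ∑ i, (v i : ℝ) :=
    Finset.sum_congr rfl fun i _ => Real.sq_sqrt (by positivity)
  rw [e1, e2, e3] at H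
  have final : ((∑ i, x i : ℕ) : ℝ) ^ 2 ≤ ((∑ i, u i : ℕ) : ℝ) * ((∑ i, v i : ℕ) : ℝ) := by
    push_cast
    exact H
  rw [pow_two] at final
  exact_mod_cast final

/-- The reflection-positivity (chessboard) inequality. -/
lemma rp [NeZero L] [DecidablePred P]
    (hθθ : ∀ x, θ (θ x) = x) (hθfp : ∀ x, θ x ≠ x)
    (hθadj : ∀ x y, torusAdj x y → torusAdj (θ x) (θ y))
    (hPθ : ∀ x, P (θ x) ↔ ¬ P x)
    (hcross : ∀ x y, torusAdj x y → P x → ¬ P y → y = θ x)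
    (a b : TorusPt d L) (ha : P a) (hb : ¬ P b) :
    dimerCount d L {a, b} * dimerCount d L {a, b} ≤
      dimerCount d L {a, θ a} * dimerCount d L {b, θ b} := by
  classical
  have hθbP : P (θ b) := (hPθ b).2 hb
  have hθaP : ¬ P (θ a) := fun h => (hPθ a).1 h ha
  have key : ∀ S, nS θ ({a, b} : Finset (TorusPt d L)) S * nS θ {a, b} S =
      nS θ {a, θ a} S * nS θ {b, θ b} S := by
    intro S
    have h1 : nS θ ({a, b} : Finset (TorusPt d L)) S = nS θ {θ b, θ a} S := by
      rw [nS_image θ hθθ hθfp hθadj {a, b} S]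
      congr 1
      rw [Finset.image_insert, Finset.image_singleton, Finset.pair_comm]
    have h2 := swap_card θ P hθfp hPθ hcross hθθ
      (A := {a}) (B := {b}) (A' := {θ b}) (B' := {θ a})
      (by simpa using ha) (by simpa using hb) (by simpa using hθbP)
      (by simpa using hθaP) S
    calc nS θ ({a, b} : Finset (TorusPt d L)) S * nS θ {a, b} S
        = nS θ {a, b} S * nS θ {θ b, θ a} S := by rw [← h1]
      _ = nS θ {a, θ a} S * nS θ {θ b, b} S := h2
      _ = nS θ {a, θ a} S * nS θ {b, θ b} S := by rw [Finset.pair_comm (θ b) b]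
  rw [dimer_sum θ, dimer_sum θ {a, θ a}, dimer_sum θ {b, θ b}]
  exact nat_cs _ _ _ key

end RP

section Assembly

variable {d L : ℕ}

lemma dimerCount_pair_map (e : TorusPt d L ≃ TorusPt d L)
    (he : ∀ x y, torusAdj x y → torusAdj (e x) (e y))
    (he' : ∀ x y, torusAdj x y → torusAdj (e.symm x) (e.symm y))
    (w w' : TorusPt d L) :
    dimerCount d L {w, w'} = dimerCount d L {e w, e w'} := by
  classical
  rw [dimerCount_image e he he' {w, w'}, Finset.image_insert, Finset.image_singleton]

lemma dimerCount_translate (v w w' : TorusPt d L) :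
    dimerCount d L {w, w'} = dimerCount d L {w + v, w' + v} := by
  have h1 : ∀ x y : TorusPt d L, torusAdj x y →
      torusAdj ((Equiv.addRight v) x) ((Equiv.addRight v) y) := by
    intro x y h
    simpa using adj_add v x y h
  have h2 : ∀ x y : TorusPt d L, torusAdj x y →
      torusAdj ((Equiv.addRight v).symm x) ((Equiv.addRight v).symm y) := by
    intro x y h
    simpa [Equiv.subLeft, Equiv.addRight] using adj_add (-v) x y h
  have := dimerCount_pair_map (Equiv.addRight v) h1 h2 w w'
  simpa using this

lemma dimerCount_neg (w w' : TorusPt d L) :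
    dimerCount d L {w, w'} = dimerCount d L {-w, -w'} := by
  have h1 : ∀ x y : TorusPt d L, torusAdj x y →
      torusAdj ((Equiv.neg (TorusPt d L)) x) ((Equiv.neg (TorusPt d L)) y) := by
    intro x y h
    simpa using adj_neg x y h
  have h2 : ∀ x y : TorusPt d L, torusAdj x y →
      torusAdj ((Equiv.neg (TorusPt d L)).symm x) ((Equiv.neg (TorusPt d L)).symm y) := by
    intro x y h
    simpa using adj_neg x y h
  have := dimerCount_pair_map (Equiv.neg (TorusPt d L)) h1 h2 w w'
  simpa using this

/-- precomposition with a coordinate transposition. -/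
lemma dimerCount_swapcoord (i i' : Fin d) (w w' : TorusPt d L) :
    dimerCount d L {w, w'} =
      dimerCount d L {w ∘ Equiv.swap i i', w' ∘ Equiv.swap i i'} := by
  have hinv : Function.Involutive (fun x : TorusPt d L => x ∘ Equiv.swap i i') := by
    intro x
    funext k
    simp [Equiv.swap_apply_self]
  have h1 : ∀ x y : TorusPt d L, torusAdj x y →
      torusAdj (hinv.toPerm _ x) (hinv.toPerm _ y) := by
    intro x y h
    exact adj_perm (Equiv.swap i i') x y h
  have := dimerCount_pair_map (hinv.toPerm _) h1 h1 w w'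
  exact this

end Assembly

end DimerAux

open DimerAux in
/-- **Monomer–monomer count is maximised at neighbouring monomers.**
For every `z ∈ T_L` with `z ≠ o`,
`|Ω^{dim}({o,z})| ≤ |Ω^{dim}({o,e_1})|`. -/
theorem dimer_count_le_neighbour
    (d L : ℕ) [NeZero L] (hd : 2 ≤ d) (hL : Even L)
    (z : TorusPt d L) (hz : z ≠ torusOrigin d L) :
    dimerCount d L {torusOrigin d L, z} ≤
      dimerCount d L {torusOrigin d L, fun k : Fin d => if (k : ℕ) = 0 then (1 : ZMod L) else 0} := by
  classical
  obtain ⟨n, hnL⟩ := hL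
  have hn2 : L = 2 * n := by omega
  have hn1 : 1 ≤ n := by
    have := NeZero.ne L
    omega
  set o : TorusPt d L := torusOrigin d L with ho
  set E : TorusPt d L := (fun k : Fin d => if (k : ℕ) = 0 then (1 : ZMod L) else 0) with hE
  set Z : Finset (TorusPt d L) := Finset.univ.erase o with hZ
  have hzZ : z ∈ Z := Finset.mem_erase.2 ⟨hz, Finset.mem_univ _⟩
  have hZne : (Z.image fun w => dimerCount d L {o, w}).Nonempty :=
    ⟨_, Finset.mem_image_of_mem _ hzZ⟩
  set M := (Z.image fun w => dimerCount d L {o, w}).max' hZne with hM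
  have hle : ∀ w, w ≠ o → dimerCount d L {o, w} ≤ M := by
    intro w hw
    rw [hM]
    apply Finset.le_max'
    exact Finset.mem_image_of_mem _ (Finset.mem_erase.2 ⟨hw, Finset.mem_univ _⟩)
  obtain ⟨zs, hzsZ, hzsM⟩ := Finset.mem_image.1 (Finset.max'_mem _ hZne)
  have hzs_ne : zs ≠ o := (Finset.mem_erase.1 hzsZ).1
  obtain ⟨j, hj⟩ : ∃ j, zs j ≠ 0 := by
    by_contra hcon
    push_neg at hcon
    exact hzs_ne (funext fun k => hcon k)
  have hjval : (zs j).val ≠ 0 := by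
    intro h
    apply hj
    have := natCast_val_self (zs j)
    rw [h] at this
    simpa using this.symm
  -- bound any pair count by M, after translating the first point to the origin
  have trans_bound : ∀ (w w' : TorusPt d L), w' ≠ w → dimerCount d L {w, w'} ≤ M := by
    intro w w' hne
    have h1 : dimerCount d L {w, w'} = dimerCount d L {o, w' + -w} := by
      have := dimerCount_translate (-w) w w'
      rw [this]
      congr 2
      funext k
      simp [o, torusOrigin]
    rw [h1]
    apply hle
    intro h
    apply hne
    have hzo : o = (0 : TorusPt d L) := rfl
    have : w' + -w + w = o + w := by rw [h]
    simpa [hzo] using this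
  set eA : TorusPt d L := (fun k => if k = j then (1 : ZMod L) else 0) with heA
  have claim1 : M ≤ dimerCount d L {o, eA} := by
    have hoj : (o j).val = 0 := by simp [o, torusOrigin]
    by_cases hcase : (zs j).val ≤ n
    · -- reflection x_j ↦ 1 - x_j , zs on the P side
      set θf : TorusPt d L → TorusPt d L := rfl' j (1 : ZMod L) with hθf
      set Pp : TorusPt d L → Prop := fun x => 1 ≤ (x j).val ∧ (x j).val ≤ n with hPp
      have hθj : ∀ x : TorusPt d L, θf x j = 1 - x j := by
        intro x; simp [θf, rfl']
      have hθk : ∀ (x : TorusPt d L) (k), k ≠ j → θf x k = x k := by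
        intro x k hk; simp [θf, rfl', hk]
      have hθθ : ∀ x, θf (θf x) = x := rfl'_invol j 1
      have hθfp : ∀ x, θf x ≠ x := by
        intro x hxe
        have := congrFun hxe j
        rw [hθj] at this
        exact afp hn2 hn1 (x j) this
      have hPθ : ∀ x, Pp (θf x) ↔ ¬ Pp x := by
        intro x
        simp only [hPp, hθj]
        exact a1 hn2 hn1 (x j)
      have hcross : ∀ x y, torusAdj x y → Pp x → ¬ Pp y → y = θf x := by
        intro x y hadj hx hy
        rw [torusAdj_iff] at hadj
        obtain ⟨m, h1, h2⟩ := hadj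
        by_cases hm : m = j
        · subst hm
          have hym : y m = 1 - x m := a2 hn2 hn1 (x m) (y m) hx hy h1
          funext k
          by_cases hk : k = m
          · subst hk; rw [hym, hθj]
          · rw [h2 k hk, hθk x k hk]
        · exfalso
          have hyj : y j = x j := h2 j (fun h => hm h.symm)
          apply hy
          simpa only [hPp, hyj] using hx
      have hrp := rp θf Pp hθθ hθfp (adj_rfl' j 1) hPθ hcross zs o
        ⟨by omega, hcase⟩ (by simp only [hPp, hoj]; omega)
      have hθo : θf o = eA := by
        funext k
        by_cases hk : k = j
        · subst hk; rw [hθj]; simp [o, torusOrigin, eA]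
        · rw [hθk o k hk]; simp [o, torusOrigin, eA, hk]
      rw [Finset.pair_comm zs o, hθo] at hrp
      -- hrp : N{o,zs} * N{o,zs} ≤ N{zs, θf zs} * N{o, eA}
      have hb2 : dimerCount d L {zs, θf zs} ≤ M := trans_bound zs (θf zs) (hθfp zs)
      have : M * M ≤ M * dimerCount d L {o, eA} := by
        calc M * M = dimerCount d L {o, zs} * dimerCount d L {o, zs} := by rw [hzsM]
          _ ≤ dimerCount d L {zs, θf zs} * dimerCount d L {o, eA} := hrp
          _ ≤ M * dimerCount d L {o, eA} :=
              Nat.mul_le_mul_right _ hb2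
      rcases Nat.eq_zero_or_pos M with h0 | hpos
      · omega
      · exact Nat.le_of_mul_le_mul_left this hpos
    · -- reflection x_j ↦ -1 - x_j , o on the P side
      set θf : TorusPt d L → TorusPt d L := rfl' j (-1 : ZMod L) with hθf
      set Pp : TorusPt d L → Prop := fun x => (x j).val < n with hPp
      have hθj : ∀ x : TorusPt d L, θf x j = -1 - x j := by
        intro x; simp [θf, rfl']
      have hθk : ∀ (x : TorusPt d L) (k), k ≠ j → θf x k = x k := by
        intro x k hk; simp [θf, rfl', hk]
      have hθθ : ∀ x, θf (θf x) = x := rfl'_invol j (-1)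
      have hθfp : ∀ x, θf x ≠ x := by
        intro x hxe
        have := congrFun hxe j
        rw [hθj] at this
        exact bfp hn2 hn1 (x j) this
      have hPθ : ∀ x, Pp (θf x) ↔ ¬ Pp x := by
        intro x
        simp only [hPp, hθj]
        exact b1 hn2 hn1 (x j)
      have hcross : ∀ x y, torusAdj x y → Pp x → ¬ Pp y → y = θf x := by
        intro x y hadj hx hy
        rw [torusAdj_iff] at hadj
        obtain ⟨m, h1, h2⟩ := hadj
        by_cases hm : m = j
        · subst hm
          have hym : y m = -1 - x m := b2 hn2 hn1 (x m) (y m) hx hy h1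
          funext k
          by_cases hk : k = m
          · subst hk; rw [hym, hθj]
          · rw [h2 k hk, hθk x k hk]
        · exfalso
          have hyj : y j = x j := h2 j (fun h => hm h.symm)
          apply hy
          simpa only [hPp, hyj] using hx
      have hrp := rp θf Pp hθθ hθfp (adj_rfl' j (-1)) hPθ hcross o zs
        (by simp only [hPp, hoj]; omega) (by simp only [hPp]; omega)
      have hθo : θf o = -eA := by
        funext k
        by_cases hk : k = j
        · subst hk; rw [hθj]; simp [o, torusOrigin, eA]
        · rw [hθk o k hk]; simp [o, torusOrigin, eA, hk]
      have hnegN : dimerCount d L {o, θf o} = dimerCount d L {o, eA} := by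
        rw [hθo]
        have := dimerCount_neg (d := d) (L := L) o (-eA)
        rw [this]
        congr 2
        · funext k; simp [o, torusOrigin]
        · simp
      rw [hnegN] at hrp
      -- hrp : N{o,zs} * N{o,zs} ≤ N{o, eA} * N{zs, θf zs}
      have hb2 : dimerCount d L {zs, θf zs} ≤ M := trans_bound zs (θf zs) (hθfp zs)
      have : M * M ≤ M * dimerCount d L {o, eA} := by
        calc M * M = dimerCount d L {o, zs} * dimerCount d L {o, zs} := by rw [hzsM]
          _ ≤ dimerCount d L {o, eA} * dimerCount d L {zs, θf zs} := hrp
          _ ≤ dimerCount d L {o, eA} * M := Nat.mul_le_mul_left _ hb2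
          _ = M * dimerCount d L {o, eA} := Nat.mul_comm _ _
      rcases Nat.eq_zero_or_pos M with h0 | hpos
      · omega
      · exact Nat.le_of_mul_le_mul_left this hpos
  have claim2 : dimerCount d L {o, eA} = dimerCount d L {o, E} := by
    have hswap := dimerCount_swapcoord j (⟨0, by omega⟩ : Fin d) o eA
    rw [hswap]
    have h1 : o ∘ ⇑(Equiv.swap j (⟨0, by omega⟩ : Fin d)) = o := rfl
    have h2 : eA ∘ ⇑(Equiv.swap j (⟨0, by omega⟩ : Fin d)) = E := by
      funext k
      simp only [Function.comp_apply, eA, E]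
      by_cases hk : (k : ℕ) = 0
      · have hk' : k = (⟨0, by omega⟩ : Fin d) := Fin.ext hk
        have hsw : (Equiv.swap j (⟨0, by omega⟩ : Fin d)) k = j := by
          rw [hk']; exact Equiv.swap_apply_right j _
        rw [if_pos hsw, if_pos hk]
      · rw [if_neg hk, if_neg ?_]
        intro hcon
        apply hk
        have hkk : k = Equiv.swap j (⟨0, by omega⟩ : Fin d) j := by
          have := congrArg (Equiv.swap j (⟨0, by omega⟩ : Fin d)) hcon
          rwa [Equiv.swap_apply_self] at this
        rw [Equiv.swap_apply_left] at hkk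
        rw [hkk]
    rw [h1, h2]
  calc dimerCount d L {o, z} ≤ M := hle z hz
    _ ≤ dimerCount d L {o, eA} := claim1
    _ = dimerCount d L {o, E} := claim2
end
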